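/- arXiv:1911.06198 — 6 statements merged into one kernel-verified Lean document; each statement's English description precedes it below -/
import Mathlib

section
/- Given a Set-Cover instance (a set N of n elements, a collection X of g subsets of N, and an integer h with 1 ≤ h ≤ g), set B = h+1 and construct the following deterministic election instance with three candidates c_0, c_1, c_2: the voter graph is the disjoint union of three components G_1, G_2, G_3. G_1 has a node v_z for each element z ∈ N and a node v_x for each set x ∈ X, with a directed edge from v_x to v_z whenever z ∈ x; every voter in G_1 has score vector ⟨0, B, B+1⟩. G_2 is a bidirected clique (an edge in each direction between every pair of its nodes) on n+h+1 nodes, each with score vector ⟨0, B+1, B⟩. G_3 is a bidirected clique on n+2g−h+3 nodes, of which n+g+2 have score vector ⟨B, B−1, B−2⟩ and g−h+1 have score vector ⟨0, B+1, 0⟩. Then there exist a seed set S and messages M with total budget |M| ≤ h+1 such that MoV(S,M,E) > 0 if and only if there exists X* ⊆ X with |X*| ≤ h and ⋃_{x∈X*} x = N. -/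
open scoped Classical

noncomputable section

/-- `v` is reachable from `s` through the edge set `Es` (every node reaches itself). -/
def Reaches {V : Type*} (Es : Set (V × V)) (s v : V) : Prop :=
  Relation.ReflTransGen (fun a b => (a, b) ∈ Es) s v

/-- The set of influenced voters: those reachable from some seed in `S`. -/
def influenced {V : Type*} [Fintype V] (Es : Set (V × V)) (S : Set V) : Finset V :=
  Finset.univ.filter (fun v => ∃ s ∈ S, Reaches Es s v)

/-- χ(S,E): the number of influenced voters. -/
def chi {V : Type*} [Fintype V] (Es : Set (V × V)) (S : Set V) : ℕ :=
  (influenced Es S).card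

/-- The tie-breaking constant ε = 1/(1 + max_{v,i} π_v(i)). -/
def eps {V : Type*} [Fintype V] {k : ℕ} (π : V → Fin k → ℕ) : ℚ :=
  1 / (1 + ((Finset.univ.sup fun v => Finset.univ.sup fun i => π v i : ℕ) : ℚ))

/-- The final score π*_v(i) = (1-ε)·π_v(i) + Σ_{s ∈ S, v reachable from s} m_s(i). -/
def finalScore {V : Type*} [Fintype V] {k : ℕ} (Es : Set (V × V)) (π : V → Fin k → ℕ)
    (S : Set V) (m : V → Fin k → ℤ) (v : V) (i : Fin k) : ℚ :=
  (1 - eps π) * (π v i : ℚ) +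
    ∑ s ∈ Finset.univ.filter (fun s => s ∈ S ∧ Reaches Es s v), (m s i : ℚ)

/-- V_c: voters whose initial score vector has a strict maximum at `c`. -/
def initVoters {V : Type*} [Fintype V] {k : ℕ} (π : V → Fin k → ℕ) (c : Fin k) : Finset V :=
  Finset.univ.filter (fun v => ∀ j, j ≠ c → π v j < π v c)

/-- V*_c: voters whose final score vector has a strict maximum at `c`. -/
def finalVoters {V : Type*} [Fintype V] {k : ℕ} (Es : Set (V × V)) (π : V → Fin k → ℕ)
    (S : Set V) (m : V → Fin k → ℤ) (c : Fin k) : Finset V :=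
  Finset.univ.filter (fun v => ∀ j, j ≠ c →
    finalScore Es π S m v j < finalScore Es π S m v c)

/-- MoV(S,M,E) = |V*_{c_0}| − max_{c ≠ c_0} |V*_c|. -/
def MoV {V : Type*} [Fintype V] {k : ℕ} [NeZero k] (Es : Set (V × V)) (π : V → Fin k → ℕ)
    (S : Set V) (m : V → Fin k → ℤ) : ℤ :=
  ((finalVoters Es π S m 0).card : ℤ) -
    (((Finset.univ.erase (0 : Fin k)).sup fun c => (finalVoters Es π S m c).card : ℕ) : ℤ)

/-- |M|: the total budget used by seed set `S` with messages `m`. -/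
def totalBudget {V : Type*} [Fintype V] {k : ℕ} (S : Set V) (m : V → Fin k → ℤ) : ℕ :=
  ∑ s ∈ Finset.univ.filter (fun s => s ∈ S), ∑ i, (m s i).natAbs

end

section SetCoverSeeding

variable (α : Type*) (g n h : ℕ)

/-- Voters: component G₁ (a node for each set of the collection and one for each element),
component G₂ (a clique of n+h+1 nodes), and component G₃ (a clique of
(n+g+2) + (g−h+1) nodes of two kinds). -/
abbrev SCVoter :=
  (Fin g ⊕ α) ⊕ (Fin (n + h + 1) ⊕ (Fin (n + g + 2) ⊕ Fin (g - h + 1)))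

variable {α g n h}

/-- Edges: in G₁ an edge from `v_x` to `v_z` whenever `z ∈ x`; G₂ and G₃ are bidirected
cliques (an edge in each direction between every pair of distinct nodes). -/
def SCEdges (X : Fin g → Finset α) : Set (SCVoter α g n h × SCVoter α g n h) :=
  { p | (∃ (x : Fin g) (z : α), z ∈ X x ∧
          p.1 = Sum.inl (Sum.inl x) ∧ p.2 = Sum.inl (Sum.inr z)) ∨
        (∃ u v : Fin (n + h + 1), u ≠ v ∧
          p.1 = Sum.inr (Sum.inl u) ∧ p.2 = Sum.inr (Sum.inl v)) ∨
        (∃ u v : Fin (n + g + 2) ⊕ Fin (g - h + 1), u ≠ v ∧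
          p.1 = Sum.inr (Sum.inr u) ∧ p.2 = Sum.inr (Sum.inr v)) }

/-- Score vectors, with B = h+1: all of G₁ has ⟨0,B,B+1⟩; G₂ has ⟨0,B+1,B⟩; in G₃,
n+g+2 nodes have ⟨B,B−1,B−2⟩ and g−h+1 nodes have ⟨0,B+1,0⟩. -/
def SCScores (B : ℕ) : SCVoter α g n h → Fin 3 → ℕ
  | Sum.inl _ => ![0, B, B + 1]
  | Sum.inr (Sum.inl _) => ![0, B + 1, B]
  | Sum.inr (Sum.inr (Sum.inl _)) => ![B, B - 1, B - 2]
  | Sum.inr (Sum.inr (Sum.inr _)) => ![0, B + 1, 0]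


/-! Since `ε * π v i < 1`, a voter's final scores compare as the integer totals `π v + r`, where
`r` is the news it receives, ties going to the lower initial score. With budget `B = h + 1` no
lead of more than `B` can be overturned, so `c₀` can only win the `n + g + 2` voters
`⟨B, B-1, B-2⟩` of `G₃`, and `c₁` always wins the other `g - h + 1` voters of `G₃`. The clique
`G₂` receives one common message; if it stayed with `c₁`, then `c₁` would have `n + g + 2` voters,
so `G₂` must swing to `c₂`, which needs a seed in `G₂`. Then `c₂` holds the `n + h + 1` voters of
`G₂`, so at most `g - h` voters of `G₁` may keep voting `c₂`: at least `n + h` voters of `G₁`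
receive news from at most `h` seeds of `G₁`. A seed of `G₁` reaches only itself and, if it is a
set, its elements; hence the seeds are `h` sets covering every element.

Conversely, enlarge a cover to exactly `h` sets, let each of them send one negative article on
`c₂` and one voter of `G₂` one negative article on `c₁`. Ties then turn the chosen sets and all
elements to `c₁` and `G₂` to `c₂`, so `c₁` and `c₂` get `n + g + 1` voters each against
`n + g + 2` for `c₀`.
-/

theorem reaches_iff_eq_or_mem {V : Type*} {Es : Set (V × V)}
    (hEs : ∀ a b c, (a, b) ∈ Es → (b, c) ∈ Es → a = c ∨ (a, c) ∈ Es) {s v : V} :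
    Reaches Es s v ↔ s = v ∨ (s, v) ∈ Es := by
  refine ⟨fun hsv => ?_, ?_⟩
  · induction hsv with
    | refl => exact .inl rfl
    | tail _ hbc ih =>
      rcases ih with rfl | hsb
      · exact .inr hbc
      · exact hEs _ _ _ hsb hbc
  · rintro (rfl | hsv)
    exacts [.refl, .single hsv]

section Election

variable {V : Type*} [Fintype V] {k : ℕ}

noncomputable def reachingSeeds (Es : Set (V × V)) (S : Set V) (v : V) : Finset V :=
  Finset.univ.filter (fun s => s ∈ S ∧ Reaches Es s v)

theorem mem_reachingSeeds {Es : Set (V × V)} {S : Set V} {v s : V} :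
    s ∈ reachingSeeds Es S v ↔ s ∈ S ∧ Reaches Es s v := by
  simp [reachingSeeds]

noncomputable def received (Es : Set (V × V)) (S : Set V) (m : V → Fin k → ℤ) (v : V) : Fin k → ℤ :=
  ∑ s ∈ reachingSeeds Es S v, m s

noncomputable def activeSeeds (S : Set V) (m : V → Fin k → ℤ) : Finset V :=
  Finset.univ.filter (fun s => s ∈ S ∧ m s ≠ 0)

theorem card_activeSeeds_le (S : Set V) (m : V → Fin k → ℤ) :
    (activeSeeds S m).card ≤ totalBudget S m := by
  rw [activeSeeds, totalBudget, Finset.card_eq_sum_ones]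
  calc ∑ s ∈ Finset.univ.filter (fun s => s ∈ S ∧ m s ≠ 0), 1
      ≤ ∑ s ∈ Finset.univ.filter (fun s => s ∈ S ∧ m s ≠ 0), ∑ i, (m s i).natAbs := by
        refine Finset.sum_le_sum fun s hs => ?_
        obtain ⟨i, hi⟩ := Function.ne_iff.mp (Finset.mem_filter.mp hs).2.2
        exact (Int.natAbs_pos.mpr hi).trans_le (Finset.single_le_sum
          (f := fun i => (m s i).natAbs) (fun _ _ => Nat.zero_le _) (Finset.mem_univ i))
    _ ≤ _ := Finset.sum_le_sum_of_subset_of_nonneg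
        (Finset.monotone_filter_right _ fun _ _ hs => hs.1) fun _ _ _ => Nat.zero_le _

theorem sum_natAbs_received_le (Es : Set (V × V)) (S : Set V) (m : V → Fin k → ℤ) (v : V) :
    ∑ i, (received Es S m v i).natAbs ≤ totalBudget S m := by
  calc ∑ i, (received Es S m v i).natAbs
      ≤ ∑ i, ∑ s ∈ reachingSeeds Es S v, (m s i).natAbs := by
        refine Finset.sum_le_sum fun i _ => ?_
        rw [received, Finset.sum_apply]
        exact Int.natAbs_sum_le _ _
    _ = ∑ s ∈ reachingSeeds Es S v, ∑ i, (m s i).natAbs := Finset.sum_comm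
    _ ≤ totalBudget S m := Finset.sum_le_sum_of_subset_of_nonneg
        (Finset.monotone_filter_right _ fun _ _ hs => hs.1) fun _ _ _ => Nat.zero_le _

theorem exists_mem_activeSeeds_reaches {Es : Set (V × V)} {S : Set V} {m : V → Fin k → ℤ}
    {v : V} (hv : received Es S m v ≠ 0) : ∃ s ∈ activeSeeds S m, Reaches Es s v := by
  contrapose! hv
  refine Finset.sum_eq_zero fun s hs => ?_
  obtain ⟨hsS, hsv⟩ := mem_reachingSeeds.mp hs
  by_contra hms
  exact hv s (Finset.mem_filter.mpr ⟨Finset.mem_univ _, hsS, hms⟩) hsv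

theorem eps_pos (π : V → Fin k → ℕ) : 0 < eps π := by
  rw [eps]; positivity

theorem eps_mul_lt_one (π : V → Fin k → ℕ) (v : V) (i : Fin k) : eps π * π v i < 1 := by
  have hle : π v i ≤ Finset.univ.sup fun v => Finset.univ.sup fun i => π v i :=
    (Finset.le_sup (f := fun i => π v i) (Finset.mem_univ i)).trans
      (Finset.le_sup (f := fun v => Finset.univ.sup fun i => π v i) (Finset.mem_univ v))
  rw [eps, one_div_mul_eq_div, div_lt_one (by positivity)]
  exact_mod_cast Nat.lt_one_add_iff.mpr hle

theorem finalScore_eq (Es : Set (V × V)) (π : V → Fin k → ℕ) (S : Set V)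
    (m : V → Fin k → ℤ) (v : V) (i : Fin k) :
    finalScore Es π S m v i = (((π v i : ℤ) + received Es S m v i : ℤ) : ℚ) - eps π * π v i := by
  rw [finalScore, received, reachingSeeds, Finset.sum_apply]
  push_cast
  ring

theorem intCast_sub_lt_intCast_sub_iff {a b : ℤ} {x y : ℚ} (hx₀ : 0 ≤ x) (hx₁ : x < 1)
    (hy₀ : 0 ≤ y) (hy₁ : y < 1) : (a : ℚ) - x < b - y ↔ a < b ∨ a = b ∧ y < x := by
  rcases lt_trichotomy a b with hab | rfl | hab
  · have : (a : ℚ) + 1 ≤ b := by exact_mod_cast hab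
    simp only [hab, true_or, iff_true]
    linarith
  · simp
  · have : (b : ℚ) + 1 ≤ a := by exact_mod_cast hab
    simp only [hab.not_gt, hab.ne', false_and, or_self, iff_false, not_lt]
    linarith

/-- The `ε`-term of `finalScore` only breaks ties between the integer totals `p + r`, in favour of
the lower initial score. -/
def Wins (p : Fin k → ℕ) (r : Fin k → ℤ) (c : Fin k) : Prop :=
  ∀ j ≠ c, (p j : ℤ) + r j < p c + r c ∨ ((p j : ℤ) + r j = p c + r c ∧ p c < p j)

theorem mem_finalVoters_iff_wins {Es : Set (V × V)} {π : V → Fin k → ℕ} {S : Set V}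
    {m : V → Fin k → ℤ} {v : V} {c : Fin k} :
    v ∈ finalVoters Es π S m c ↔ Wins (π v) (received Es S m v) c := by
  have hε := eps_pos π
  simp only [finalVoters, Finset.mem_filter, Finset.mem_univ, true_and, Wins, finalScore_eq]
  refine forall₂_congr fun j _ => ?_
  rw [intCast_sub_lt_intCast_sub_iff (by positivity) (eps_mul_lt_one π v j) (by positivity)
    (eps_mul_lt_one π v c), mul_lt_mul_iff_right₀ hε, Nat.cast_lt]

theorem natAbs_add_natAbs_le_sum {r : Fin k → ℤ} {i j : Fin k} (hij : i ≠ j) :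
    (r i).natAbs + (r j).natAbs ≤ ∑ l, (r l).natAbs :=
  Finset.add_le_sum (f := fun l => (r l).natAbs) (fun _ _ => Nat.zero_le _) (Finset.mem_univ i)
    (Finset.mem_univ j) hij

theorem wins_of_margin {p : Fin k → ℕ} {r : Fin k → ℤ} {c : Fin k} {b : ℕ}
    (hp : ∀ j ≠ c, p j + b < p c) (hr : ∑ i, (r i).natAbs ≤ b) : Wins p r c := by
  intro j hj
  have := hp j hj
  have := natAbs_add_natAbs_le_sum (r := r) hj
  exact .inl (by omega)

theorem not_wins_of_margin {p : Fin k → ℕ} {r : Fin k → ℤ} {c j : Fin k} {b : ℕ} (hj : j ≠ c)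
    (hp : p c + b < p j) (hr : ∑ i, (r i).natAbs ≤ b) : ¬ Wins p r c := by
  intro hwin
  have := hwin j hj
  have := natAbs_add_natAbs_le_sum (r := r) hj
  omega

theorem disjoint_finalVoters (Es : Set (V × V)) (π : V → Fin k → ℕ) (S : Set V)
    (m : V → Fin k → ℤ) {c d : Fin k} (hcd : c ≠ d) :
    Disjoint (finalVoters Es π S m c) (finalVoters Es π S m d) := by
  refine Finset.disjoint_left.mpr fun v hc hd => ?_
  simp only [finalVoters, Finset.mem_filter] at hc hd
  exact (hc.2 d hcd.symm).asymm (hd.2 c hcd)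

theorem sum_card_finalVoters_le (Es : Set (V × V)) (π : V → Fin k → ℕ) (S : Set V)
    (m : V → Fin k → ℤ) : ∑ c, (finalVoters Es π S m c).card ≤ Fintype.card V := by
  rw [← Finset.card_biUnion fun c _ d _ hcd => disjoint_finalVoters Es π S m hcd]
  exact Finset.card_le_univ _

theorem MoV_pos_iff [NeZero k] {Es : Set (V × V)} {π : V → Fin k → ℕ} {S : Set V}
    {m : V → Fin k → ℤ} : 0 < MoV Es π S m ↔ 0 < (finalVoters Es π S m 0).card ∧
      ∀ c ≠ 0, (finalVoters Es π S m c).card < (finalVoters Es π S m 0).card := by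
  rw [MoV, sub_pos, Nat.cast_lt]
  constructor
  · intro hlt
    have hpos := (Nat.zero_le _).trans_lt hlt
    exact ⟨hpos, fun c hc =>
      (Finset.sup_lt_iff hpos).mp hlt c (Finset.mem_erase.mpr ⟨hc, Finset.mem_univ c⟩)⟩
  · rintro ⟨hpos, hlt⟩
    exact (Finset.sup_lt_iff hpos).mpr fun c hc => hlt c (Finset.ne_of_mem_erase hc)

theorem mem_finalVoters_of_received_eq_zero {Es : Set (V × V)} {π : V → Fin k → ℕ} {S : Set V}
    {m : V → Fin k → ℤ} {v : V} {c : Fin k}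
    (hv : received Es S m v = 0) (hc : v ∈ initVoters π c) : v ∈ finalVoters Es π S m c := by
  rw [mem_finalVoters_iff_wins, hv]
  exact wins_of_margin (b := 0) (fun j hj => (Finset.mem_filter.mp hc).2 j hj) (by simp)

end Election

section Reachability

variable (X : Fin g → Finset α)

theorem reaches_SCEdges_iff {s v : SCVoter α g n h} :
    Reaches (SCEdges X) s v ↔ s = v ∨ (s, v) ∈ SCEdges X := by
  refine reaches_iff_eq_or_mem fun a b c hab hbc => ?_
  rcases hab with ⟨x, z, -, rfl, rfl⟩ | ⟨u, v, -, rfl, rfl⟩ | ⟨u, v, -, rfl, rfl⟩ <;>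
    rcases hbc with ⟨x', z', -, hb, rfl⟩ | ⟨v', w, -, hb, rfl⟩ | ⟨v', w, -, hb, rfl⟩ <;>
    simp only [Sum.inl.injEq, Sum.inr.injEq, reduceCtorEq] at hb
  · rcases eq_or_ne u w with rfl | huw
    · exact .inl rfl
    · exact .inr (.inr (.inl ⟨u, w, huw, rfl, rfl⟩))
  · rcases eq_or_ne u w with rfl | huw
    · exact .inl rfl
    · exact .inr (.inr (.inr ⟨u, w, huw, rfl, rfl⟩))

theorem reaches_set_iff {s : SCVoter α g n h} {x : Fin g} :
    Reaches (SCEdges X) s (.inl (.inl x)) ↔ s = .inl (.inl x) := by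
  rw [reaches_SCEdges_iff]
  simp [SCEdges]

theorem reaches_elem_iff {s : SCVoter α g n h} {z : α} :
    Reaches (SCEdges X) s (.inl (.inr z)) ↔
      s = .inl (.inr z) ∨ ∃ x, z ∈ X x ∧ s = .inl (.inl x) := by
  rw [reaches_SCEdges_iff]
  simp [SCEdges]

theorem reaches_G2_iff {s : SCVoter α g n h} {u : Fin (n + h + 1)} :
    Reaches (SCEdges X) s (.inr (.inl u)) ↔ ∃ u', s = .inr (.inl u') := by
  rw [reaches_SCEdges_iff]
  constructor
  · rintro (rfl | ⟨_, _, _, _, hv⟩ | ⟨u', _, _, rfl, _⟩ | ⟨_, _, _, _, hv⟩) <;> simp_all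
  · rintro ⟨u', rfl⟩
    rcases eq_or_ne u' u with rfl | hne
    exacts [.inl rfl, .inr (.inr (.inl ⟨u', u, hne, rfl, rfl⟩))]

theorem reaches_G3_iff {s : SCVoter α g n h} {w : Fin (n + g + 2) ⊕ Fin (g - h + 1)} :
    Reaches (SCEdges X) s (.inr (.inr w)) ↔ ∃ w', s = .inr (.inr w') := by
  rw [reaches_SCEdges_iff]
  constructor
  · rintro (rfl | ⟨_, _, _, _, hv⟩ | ⟨_, _, _, _, hv⟩ | ⟨w', _, _, rfl, _⟩) <;> simp_all
  · rintro ⟨w', rfl⟩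
    rcases eq_or_ne w' w with rfl | hne
    exacts [.inl rfl, .inr (.inr (.inr ⟨w', w, hne, rfl, rfl⟩))]

theorem exists_eq_inl_of_reaches {s : SCVoter α g n h}
    {y : Fin g ⊕ α} (hs : Reaches (SCEdges X) s (.inl y)) : ∃ t, s = .inl t := by
  rcases y with x | z
  · exact ⟨_, (reaches_set_iff X).mp hs⟩
  · rcases (reaches_elem_iff X).mp hs with hs | ⟨x, -, hs⟩ <;> exact ⟨_, hs⟩

end Reachability

section ThreeCandidates

variable {B : ℕ} {r : Fin 3 → ℤ}

theorem wins_two_of_lt (hr : ∑ i, (r i).natAbs ≤ B) (h12 : r 1 < r 2) :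
    Wins ![0, B + 1, B] r 2 := by
  rw [Fin.sum_univ_three] at hr
  intro j hj
  fin_cases j <;> simp_all <;> omega

theorem wins_one_of_le (hr : ∑ i, (r i).natAbs ≤ B) (h21 : r 2 ≤ r 1) :
    Wins ![0, B + 1, B] r 1 := by
  rw [Fin.sum_univ_three] at hr
  intro j hj
  fin_cases j <;> simp_all <;> omega

theorem wins_one_of_neg (hB : 0 < B) (hr0 : r 0 = 0) (hr1 : r 1 = 0) (hr2 : r 2 < 0) :
    Wins ![0, B, B + 1] r 1 := by
  intro j hj
  fin_cases j <;> simp_all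
  omega

end ThreeCandidates

section Votes

variable [Fintype α]

theorem G1_mem_initVoters_two (y : Fin g ⊕ α) :
    (.inl y : SCVoter α g n h) ∈ initVoters (SCScores (h + 1)) 2 :=
  Finset.mem_filter.mpr ⟨Finset.mem_univ _, fun j hj => by fin_cases j <;> simp_all [SCScores]⟩

theorem G3_mem_initVoters_zero (w : Fin (n + g + 2)) :
    (.inr (.inr (.inl w)) : SCVoter α g n h) ∈ initVoters (SCScores (h + 1)) 0 :=
  Finset.mem_filter.mpr ⟨Finset.mem_univ _, fun j hj => by fin_cases j <;> simp_all [SCScores]⟩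

theorem G3_mem_initVoters_one (w : Fin (g - h + 1)) :
    (.inr (.inr (.inr w)) : SCVoter α g n h) ∈ initVoters (SCScores (h + 1)) 1 :=
  Finset.mem_filter.mpr ⟨Finset.mem_univ _, fun j hj => by fin_cases j <;> simp_all [SCScores]⟩

theorem received_G2_eq (X : Fin g → Finset α) (S : Set (SCVoter α g n h))
    (m : SCVoter α g n h → Fin 3 → ℤ) (u u' : Fin (n + h + 1)) :
    received (SCEdges X) S m (.inr (.inl u)) = received (SCEdges X) S m (.inr (.inl u')) := by
  rw [received, received]
  congr 1
  ext s
  simp only [mem_reachingSeeds, reaches_G2_iff]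

section Converse

variable {X : Fin g → Finset α} {S : Set (SCVoter α g n h)} {m : SCVoter α g n h → Fin 3 → ℤ}

theorem card_finalVoters_zero_le (hb : totalBudget S m ≤ h + 1) :
    (finalVoters (SCEdges X) (SCScores (h + 1)) S m 0).card ≤ n + g + 2 := by
  have hr := fun v => (sum_natAbs_received_le (SCEdges X) S m v).trans hb
  calc _ ≤ (Finset.disjSum ∅ (Finset.disjSum ∅ (Finset.disjSum Finset.univ ∅)) :
        Finset (SCVoter α g n h)).card := by
        refine Finset.card_le_card fun v hv => ?_
        rw [mem_finalVoters_iff_wins] at hv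
        rcases v with y | u | w | w
        · exact absurd hv (not_wins_of_margin (j := 2) (by decide) (by simp [SCScores]) (hr _))
        · exact absurd hv (not_wins_of_margin (j := 1) (by decide) (by simp [SCScores]) (hr _))
        · simp
        · exact absurd hv (not_wins_of_margin (j := 1) (by decide) (by simp [SCScores]) (hr _))
    _ = n + g + 2 := by simp

theorem G3_mem_finalVoters_one (hb : totalBudget S m ≤ h + 1) (w : Fin (g - h + 1)) :
    .inr (.inr (.inr w)) ∈ finalVoters (SCEdges X) (SCScores (h + 1)) S m 1 := by
  rw [mem_finalVoters_iff_wins]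
  refine wins_of_margin (fun j hj => ?_) ((sum_natAbs_received_le (SCEdges X) S m _).trans hb)
  fin_cases j <;> simp_all [SCScores]

theorem received_G2_one_lt_two (hb : totalBudget S m ≤ h + 1)
    (hmov : 0 < MoV (SCEdges X) (SCScores (h + 1)) S m) :
    received (SCEdges X) S m (.inr (.inl 0)) 1 < received (SCEdges X) S m (.inr (.inl 0)) 2 := by
  by_contra! h21
  have hG2 (u : Fin (n + h + 1)) :
      .inr (.inl u) ∈ finalVoters (SCEdges X) (SCScores (h + 1)) S m 1 := by
    rw [mem_finalVoters_iff_wins, received_G2_eq X S m u 0]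
    exact wins_one_of_le ((sum_natAbs_received_le (SCEdges X) S m _).trans hb) h21
  have hsub : (Finset.disjSum ∅ (Finset.disjSum Finset.univ (Finset.disjSum ∅ Finset.univ)) :
      Finset (SCVoter α g n h)) ⊆ finalVoters (SCEdges X) (SCScores (h + 1)) S m 1 := by
    rintro (y | u | w | w) hv <;> simp only [Finset.inl_mem_disjSum, Finset.inr_mem_disjSum,
      Finset.notMem_empty, Finset.mem_univ] at hv
    exacts [hG2 u, G3_mem_finalVoters_one hb w]
  have hcard := Finset.card_le_card hsub
  have hlt := (MoV_pos_iff.mp hmov).2 1 (by decide)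
  have hV0 := card_finalVoters_zero_le (X := X) hb
  simp only [Finset.card_disjSum, Finset.card_empty, Finset.card_univ, Fintype.card_fin] at hcard
  omega

theorem G2_mem_finalVoters_two (hb : totalBudget S m ≤ h + 1)
    (hmov : 0 < MoV (SCEdges X) (SCScores (h + 1)) S m) (u : Fin (n + h + 1)) :
    .inr (.inl u) ∈ finalVoters (SCEdges X) (SCScores (h + 1)) S m 2 := by
  rw [mem_finalVoters_iff_wins, received_G2_eq X S m u 0]
  exact wins_two_of_lt ((sum_natAbs_received_le (SCEdges X) S m _).trans hb)
    (received_G2_one_lt_two hb hmov)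

theorem le_card_G1_received_ne_zero (hcard : Fintype.card α = n) (hb : totalBudget S m ≤ h + 1)
    (hmov : 0 < MoV (SCEdges X) (SCScores (h + 1)) S m) :
    n + h ≤ (Finset.univ.filter fun y => received (SCEdges X) S m (.inl y) ≠ 0).card := by
  set Z := Finset.univ.filter fun y => received (SCEdges X) S m (.inl y) ≠ 0
  have hsub : (Finset.disjSum Zᶜ (Finset.disjSum Finset.univ ∅) : Finset (SCVoter α g n h)) ⊆
      finalVoters (SCEdges X) (SCScores (h + 1)) S m 2 := by
    rintro (y | u | w) hv <;> simp [Z] at hv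
    exacts [mem_finalVoters_of_received_eq_zero hv (G1_mem_initVoters_two y),
      G2_mem_finalVoters_two hb hmov u]
  have hV2 := Finset.card_le_card hsub
  have hlt := (MoV_pos_iff.mp hmov).2 2 (by decide)
  have hV0 := card_finalVoters_zero_le (X := X) hb
  simp only [Finset.card_disjSum, Finset.card_compl, Finset.card_empty, Finset.card_univ,
    Fintype.card_fin, Fintype.card_sum, hcard] at hV2
  have := Finset.card_le_univ Z
  simp only [Fintype.card_sum, Fintype.card_fin, hcard] at this
  omega

theorem card_activeSeeds_toLeft_le (hb : totalBudget S m ≤ h + 1)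
    (hmov : 0 < MoV (SCEdges X) (SCScores (h + 1)) S m) : (activeSeeds S m).toLeft.card ≤ h := by
  have hne : received (SCEdges X) S m (.inr (.inl 0)) ≠ 0 := fun h0 => by
    simpa [h0] using received_G2_one_lt_two hb hmov
  obtain ⟨s, hs, hreach⟩ := exists_mem_activeSeeds_reaches hne
  obtain ⟨u, rfl⟩ := (reaches_G2_iff X).mp hreach
  have hright : (activeSeeds S m).toRight.Nonempty := ⟨.inl u, Finset.mem_toRight.mpr hs⟩
  have := hright.card_pos
  have := Finset.card_toLeft_add_card_toRight (u := activeSeeds S m)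
  have := card_activeSeeds_le S m
  omega

/-- A seed reaches at most one set node, itself: so the `n + h` reached voters force at least `h`
set seeds, hence no element seed, and every element is then reached from a set seed. -/
theorem exists_cover_of_reached (hcard : Fintype.card α = n)
    {T Z : Finset (Fin g ⊕ α)} (hT : T.card ≤ h) (hZ : n + h ≤ Z.card)
    (hreach : ∀ y ∈ Z, ∃ t ∈ T, Reaches (SCEdges (n := n) (h := h) X) (.inl t) (.inl y)) :
    ∃ J : Finset (Fin g), J.card ≤ h ∧ ∀ z : α, ∃ x ∈ J, z ∈ X x := by
  have hsub : Z ⊆ T.toLeft.disjSum Finset.univ := by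
    rintro (x | z) hy
    · obtain ⟨t, ht, hr⟩ := hreach _ hy
      obtain rfl := Sum.inl_injective ((reaches_set_iff X).mp hr)
      exact Finset.inl_mem_disjSum.mpr (Finset.mem_toLeft.mpr ht)
    · exact Finset.inr_mem_disjSum.mpr (Finset.mem_univ z)
  have hsplit := Finset.card_toLeft_add_card_toRight (u := T)
  have hle := Finset.card_le_card hsub
  rw [Finset.card_disjSum, Finset.card_univ, hcard] at hle
  have hright : T.toRight = ∅ := Finset.card_eq_zero.mp (by omega)
  have hZeq := Finset.eq_of_subset_of_card_le hsub (by
    rw [Finset.card_disjSum, Finset.card_univ, hcard]; omega)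
  refine ⟨T.toLeft, by omega, fun z => ?_⟩
  obtain ⟨t, ht, hr⟩ := hreach (.inr z) (hZeq ▸ Finset.inr_mem_disjSum.mpr (Finset.mem_univ z))
  rcases (reaches_elem_iff X).mp hr with hzt | ⟨x, hz, hxt⟩
  · obtain rfl := Sum.inl_injective hzt
    simpa [hright] using Finset.mem_toRight.mpr ht
  · obtain rfl := Sum.inl_injective hxt
    exact ⟨x, Finset.mem_toLeft.mpr ht, hz⟩

theorem exists_cover_of_MoV_pos (hcard : Fintype.card α = n) (hb : totalBudget S m ≤ h + 1)
    (hmov : 0 < MoV (SCEdges X) (SCScores (h + 1)) S m) :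
    ∃ J : Finset (Fin g), J.card ≤ h ∧ ∀ z : α, ∃ x ∈ J, z ∈ X x := by
  refine exists_cover_of_reached hcard (card_activeSeeds_toLeft_le hb hmov)
    (le_card_G1_received_ne_zero hcard hb hmov) fun y hy => ?_
  obtain ⟨s, hs, hreach⟩ := exists_mem_activeSeeds_reaches (Finset.mem_filter.mp hy).2
  obtain ⟨t, rfl⟩ := exists_eq_inl_of_reaches X hreach
  exact ⟨t, Finset.mem_toLeft.mpr hs, hreach⟩

end Converse

section Forward

variable (X : Fin g → Finset α) (J : Finset (Fin g))

/-- Used with every voter as a seed: a seed with the zero message costs nothing. -/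
noncomputable def coverMessage : SCVoter α g n h → Fin 3 → ℤ
  | .inl (.inl x) => if x ∈ J then ![0, 0, -1] else 0
  | .inr (.inl u) => if u = 0 then ![0, -1, 0] else 0
  | _ => 0

theorem totalBudget_coverMessage :
    totalBudget Set.univ (coverMessage (α := α) (n := n) (h := h) J) = J.card + 1 := by
  simp [totalBudget, Fintype.sum_sum_type, coverMessage, Fin.sum_univ_three, ite_apply, apply_ite]

theorem received_coverMessage_set (x : Fin g) :
    received (SCEdges X) Set.univ (coverMessage (n := n) (h := h) J) (.inl (.inl x)) =
      if x ∈ J then ![0, 0, -1] else 0 := by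
  have hseeds : reachingSeeds (SCEdges X) Set.univ (.inl (.inl x) : SCVoter α g n h) =
      {.inl (.inl x)} := by
    ext s
    simp [mem_reachingSeeds, reaches_set_iff]
  rw [received, hseeds, Finset.sum_singleton]
  rfl

theorem received_coverMessage_G2 (u : Fin (n + h + 1)) :
    received (SCEdges X) Set.univ (coverMessage (n := n) (h := h) J) (.inr (.inl u)) =
      ![0, -1, 0] := by
  have h0 : (.inr (.inl 0) : SCVoter α g n h) ∈
      reachingSeeds (SCEdges X) Set.univ (.inr (.inl u)) :=
    mem_reachingSeeds.mpr ⟨Set.mem_univ _, (reaches_G2_iff X).mpr ⟨0, rfl⟩⟩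
  rw [received, Finset.sum_eq_single_of_mem _ h0]
  · simp [coverMessage]
  · intro s hs hs0
    obtain ⟨u', rfl⟩ := (reaches_G2_iff X).mp (mem_reachingSeeds.mp hs).2
    simp_all [coverMessage]

theorem received_coverMessage_G3 (w : Fin (n + g + 2) ⊕ Fin (g - h + 1)) :
    received (SCEdges X) Set.univ (coverMessage (n := n) (h := h) J) (.inr (.inr w)) = 0 := by
  refine Finset.sum_eq_zero fun s hs => ?_
  obtain ⟨w', rfl⟩ := (reaches_G3_iff X).mp (mem_reachingSeeds.mp hs).2
  rfl

theorem elem_mem_finalVoters_coverMessage_one {z : α} (hz : ∃ x ∈ J, z ∈ X x) :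
    (.inl (.inr z) : SCVoter α g n h) ∈
      finalVoters (SCEdges X) (SCScores (h + 1)) Set.univ (coverMessage J) 1 := by
  rw [mem_finalVoters_iff_wins]
  refine wins_one_of_neg h.succ_pos ?_ ?_ ?_ <;> rw [received, Finset.sum_apply]
  · refine Finset.sum_eq_zero fun s _ => ?_
    rcases s with (x | z) | u | w <;> simp [coverMessage, ite_apply]
  · refine Finset.sum_eq_zero fun s hs => ?_
    obtain ⟨(x | z), rfl⟩ := exists_eq_inl_of_reaches X (mem_reachingSeeds.mp hs).2 <;>
      simp [coverMessage, ite_apply]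
  · obtain ⟨x, hxJ, hzx⟩ := hz
    have hx : (.inl (.inl x) : SCVoter α g n h) ∈
        reachingSeeds (SCEdges X) Set.univ (.inl (.inr z)) :=
      mem_reachingSeeds.mpr ⟨Set.mem_univ _, (reaches_elem_iff X).mpr (.inr ⟨x, hzx, rfl⟩)⟩
    calc _ ≤ ∑ s ∈ {.inl (.inl x)}, coverMessage (n := n) (h := h) J s 2 :=
          Finset.sum_le_sum_of_subset_of_nonpos' (Finset.singleton_subset_iff.mpr hx)
            fun s _ _ => by
              rcases s with (x | z) | u | w <;> simp [coverMessage, ite_apply]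
              split_ifs <;> simp
      _ < 0 := by simp [coverMessage, hxJ]

theorem le_card_finalVoters_coverMessage_zero :
    n + g + 2 ≤ (finalVoters (SCEdges X) (SCScores (h + 1)) Set.univ
      (coverMessage (n := n) (h := h) J) 0).card := by
  calc n + g + 2 = (Finset.disjSum ∅ (Finset.disjSum ∅ (Finset.disjSum Finset.univ ∅)) :
        Finset (SCVoter α g n h)).card := by simp
    _ ≤ _ := Finset.card_le_card fun v hv => ?_
  rcases v with y | u | w | w <;> simp at hv
  exact mem_finalVoters_of_received_eq_zero (received_coverMessage_G3 X J _)
    (G3_mem_initVoters_zero w)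

theorem le_card_finalVoters_coverMessage_one (hcard : Fintype.card α = n) (hhg : h ≤ g)
    (hJ : J.card = h) (hcov : ∀ z, ∃ x ∈ J, z ∈ X x) :
    n + g + 1 ≤ (finalVoters (SCEdges X) (SCScores (h + 1)) Set.univ
      (coverMessage (n := n) (h := h) J) 1).card := by
  calc n + g + 1 ≤ (Finset.disjSum (J.disjSum Finset.univ) (Finset.disjSum ∅ (Finset.disjSum ∅
        Finset.univ)) : Finset (SCVoter α g n h)).card := by simp [hJ, hcard]; omega
    _ ≤ _ := Finset.card_le_card fun v hv => ?_
  rcases v with (x | z) | u | w | w <;> simp at hv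
  · rw [mem_finalVoters_iff_wins, received_coverMessage_set, if_pos hv]
    exact wins_one_of_neg h.succ_pos rfl rfl (by simp)
  · exact elem_mem_finalVoters_coverMessage_one X J (hcov z)
  · exact mem_finalVoters_of_received_eq_zero (received_coverMessage_G3 X J _)
      (G3_mem_initVoters_one w)

theorem le_card_finalVoters_coverMessage_two (hhg : h ≤ g) (hJ : J.card = h) :
    n + g + 1 ≤ (finalVoters (SCEdges X) (SCScores (h + 1)) Set.univ
      (coverMessage (n := n) (h := h) J) 2).card := by
  calc n + g + 1 ≤ (Finset.disjSum (Jᶜ.disjSum ∅) (Finset.disjSum Finset.univ ∅) :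
        Finset (SCVoter α g n h)).card := by simp [Finset.card_compl, hJ]; omega
    _ ≤ _ := Finset.card_le_card fun v hv => ?_
  rcases v with (x | z) | u | w <;> simp at hv
  · refine mem_finalVoters_of_received_eq_zero ?_ (G1_mem_initVoters_two _)
    rw [received_coverMessage_set, if_neg hv]
  · rw [mem_finalVoters_iff_wins, received_coverMessage_G2]
    exact wins_two_of_lt (by simp [Fin.sum_univ_three]) (by simp)

theorem MoV_coverMessage_pos (hcard : Fintype.card α = n) (hhg : h ≤ g) (hJ : J.card = h)
    (hcov : ∀ z, ∃ x ∈ J, z ∈ X x) :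
    0 < MoV (SCEdges X) (SCScores (h + 1)) Set.univ (coverMessage (n := n) (h := h) J) := by
  have h0 := le_card_finalVoters_coverMessage_zero (n := n) (h := h) X J
  have h1 := le_card_finalVoters_coverMessage_one X J hcard hhg hJ hcov
  have h2 := le_card_finalVoters_coverMessage_two (n := n) X J hhg hJ
  have htot := sum_card_finalVoters_le (SCEdges X) (SCScores (h + 1)) Set.univ
    (coverMessage (n := n) (h := h) J)
  simp only [Fin.sum_univ_three, Fintype.card_sum, Fintype.card_fin, hcard] at htot
  refine MoV_pos_iff.mpr ⟨by omega, fun c hc => ?_⟩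
  fin_cases c <;> simp at hc ⊢ <;> omega

end Forward

end Votes

theorem seeding_positive_MoV_iff_setCover_general {α : Type*} [Fintype α]
    (n g h : ℕ) (hcard : Fintype.card α = n) (hhg : h ≤ g)
    (X : Fin g → Finset α) :
    (∃ (S : Set (SCVoter α g n h)) (m : SCVoter α g n h → Fin 3 → ℤ),
        totalBudget S m ≤ h + 1 ∧
        0 < MoV (SCEdges X) (SCScores (h + 1)) S m) ↔
    (∃ J : Finset (Fin g), J.card ≤ h ∧ ∀ z : α, ∃ x ∈ J, z ∈ X x) := by
  constructor
  · rintro ⟨S, m, hb, hmov⟩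
    exact exists_cover_of_MoV_pos hcard hb hmov
  · rintro ⟨J, hJ, hcov⟩
    obtain ⟨J', hJJ', -, hJ'⟩ :=
      Finset.exists_subsuperset_card_eq (Finset.subset_univ J) hJ (by simpa using hhg)
    refine ⟨Set.univ, coverMessage J', (totalBudget_coverMessage J').trans_le (by omega),
      MoV_coverMessage_pos X J' hcard hhg hJ' fun z => ?_⟩
    obtain ⟨x, hx, hzx⟩ := hcov z
    exact ⟨x, hJJ' hx, hzx⟩

/-- There is a seeding (S, M) of budget at most B = h+1 achieving MoV > 0 if and only if
the Set-Cover instance admits a cover of size at most h. -/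
theorem seeding_positive_MoV_iff_setCover {α : Type*} [Fintype α] [DecidableEq α]
    (n g h : ℕ) (hcard : Fintype.card α = n) (hh : 1 ≤ h) (hhg : h ≤ g)
    (X : Fin g → Finset α) :
    (∃ (S : Set (SCVoter α g n h)) (m : SCVoter α g n h → Fin 3 → ℤ),
        totalBudget S m ≤ h + 1 ∧
        0 < MoV (SCEdges X) (SCScores (h + 1)) S m) ↔
    (∃ J : Finset (Fin g), J.card ≤ h ∧ ∀ z : α, ∃ x ∈ J, z ∈ X x) :=
  seeding_positive_MoV_iff_setCover_general n g h hcard hhg X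

end SetCoverSeeding
end

section
/- Let V be a finite set and f : 𝒫(V) → ℝ be monotone (f(A) ≤ f(B) whenever A ⊆ B ⊆ V), submodular (f(A∪{x}) − f(A) ≥ f(B∪{x}) − f(B) whenever A ⊆ B ⊆ V and x ∈ V∖B), and satisfy f(∅) = 0. Let 1 ≤ k ≤ B ≤ |V|, let S'' ⊆ V with |S''| = k be such that f(S'') ≥ f(T) for every T ⊆ V with |T| = k, and let S' ⊆ V be any subset with |S'| = B. Then k·f(S') ≤ B·f(S''). -/
/-!
Removing one element from a set `S` loses, on average over its elements, at most `f S / #S`: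
by submodularity the marginal losses `f S - f (S \ {x})` sum to at most `f S - f ∅ = f S`.
So some `x` has `(#S - 1) f S ≤ #S f (S \ {x})`; iterating down to size `k` produces a
`k`-subset `T ⊆ S'` with `k f S' ≤ B f T`, and `f T ≤ f S''` by optimality.
-/

section

open Finset

variable {V : Type*} [DecidableEq V]

def IsSubmodular (f : Finset V → ℝ) : Prop :=
  ∀ (A B : Finset V) (x : V), A ⊆ B → x ∉ B → f (insert x B) - f B ≤ f (insert x A) - f A

namespace IsSubmodular

variable {f : Finset V → ℝ}

theorem sum_sub_erase_le (hf : IsSubmodular f) (S : Finset V) :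
    ∑ x ∈ S, (f S - f (S.erase x)) ≤ f S - f ∅ := by
  induction S using Finset.induction_on with
  | empty => simp
  | @insert a S haS ih =>
    have hloss : ∀ x ∈ S, f (insert a S) - f ((insert a S).erase x) ≤ f S - f (S.erase x) := by
      intro x hx
      have h := hf (S.erase x) ((insert a S).erase x) x
        (erase_subset_erase x (subset_insert a S)) (notMem_erase x _)
      rwa [insert_erase (mem_insert_of_mem hx), insert_erase hx] at h
    rw [sum_insert haS, erase_insert haS]
    linarith [sum_le_sum hloss]

theorem exists_mul_le_mul_erase (hf : IsSubmodular f) (hempty : f ∅ = 0) {S : Finset V}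
    (hS : S.Nonempty) : ∃ x ∈ S, ((#S : ℝ) - 1) * f S ≤ #S * f (S.erase x) := by
  have hsum : ∑ x ∈ S, (#S : ℝ) * (f S - f (S.erase x)) ≤ ∑ _x ∈ S, f S := by
    rw [← mul_sum, sum_const, nsmul_eq_mul]
    have := hf.sum_sub_erase_le S
    gcongr
    linarith
  obtain ⟨x, hx, hle⟩ := exists_le_of_sum_le hS hsum
  exact ⟨x, hx, by linarith⟩

theorem exists_subset_card_eq_mul_le (hf : IsSubmodular f) (hempty : f ∅ = 0) {k : ℕ}
    {S : Finset V} (hkS : k ≤ #S) : ∃ T ⊆ S, #T = k ∧ (k : ℝ) * f S ≤ #S * f T := by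
  rcases Nat.eq_zero_or_pos k with rfl | hk
  · exact ⟨∅, empty_subset S, card_empty, by simp [hempty]⟩
  obtain ⟨n, hn⟩ := Nat.exists_eq_add_of_le hkS
  induction n generalizing S with
  | zero => exact ⟨S, subset_refl S, by omega, by rw [hn, add_zero]⟩
  | succ n ih =>
    obtain ⟨x, hx, hstep⟩ := hf.exists_mul_le_mul_erase hempty (S := S) (card_pos.mp (by omega))
    have hcard : #(S.erase x) = k + n := by rw [card_erase_of_mem hx]; omega
    obtain ⟨T, hTS, hTk, hT⟩ := ih (by omega) hcard
    refine ⟨T, hTS.trans (erase_subset x S), hTk, ?_⟩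
    have hcard' : (#S : ℝ) - 1 = #(S.erase x) := by rw [hcard, hn]; push_cast; ring
    rw [hcard'] at hstep
    have hpos : (0 : ℝ) < #(S.erase x) := by rw [hcard]; positivity
    -- multiply `hstep` by `k` and `hT` by `#S`, then cancel `#(S \ {x})`
    refine le_of_mul_le_mul_left ?_ hpos
    nlinarith [mul_le_mul_of_nonneg_left hstep (Nat.cast_nonneg (α := ℝ) k),
      mul_le_mul_of_nonneg_left hT (Nat.cast_nonneg (α := ℝ) #S)]

end IsSubmodular

end

theorem submodular_cardinality_scaling_general {V : Type*} [DecidableEq V]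
    (f : Finset V → ℝ)
    (hsub : ∀ (A B : Finset V) (x : V), A ⊆ B → x ∉ B →
      f (insert x B) - f B ≤ f (insert x A) - f A)
    (hempty : f ∅ = 0)
    (k B : ℕ) (hkB : k ≤ B)
    (S'' : Finset V)
    (hS''opt : ∀ T : Finset V, T.card = k → f T ≤ f S'')
    (S' : Finset V) (hS'card : S'.card = B) :
    (k : ℝ) * f S' ≤ (B : ℝ) * f S'' := by
  obtain ⟨T, -, hTk, hT⟩ :=
    IsSubmodular.exists_subset_card_eq_mul_le hsub hempty (hS'card ▸ hkB : k ≤ S'.card)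
  rw [hS'card] at hT
  calc (k : ℝ) * f S' ≤ B * f T := hT
    _ ≤ B * f S'' := by gcongr; exact hS''opt T hTk

/-- Scaling inequality between optima of a monotone submodular function over
cardinality-constrained families: if `S''` is an optimal set of size `k` and `S'` is any
set of size `B ≥ k`, then `k·f(S') ≤ B·f(S'')`. -/
theorem submodular_cardinality_scaling {V : Type*} [Fintype V] [DecidableEq V]
    (f : Finset V → ℝ)
    (hmono : ∀ A B : Finset V, A ⊆ B → f A ≤ f B)
    (hsub : ∀ (A B : Finset V) (x : V), A ⊆ B → x ∉ B →
      f (insert x B) - f B ≤ f (insert x A) - f A)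
    (hempty : f ∅ = 0)
    (k B : ℕ) (hk : 1 ≤ k) (hkB : k ≤ B) (hB : B ≤ Fintype.card V)
    (S'' : Finset V) (hS''card : S''.card = k)
    (hS''opt : ∀ T : Finset V, T.card = k → f T ≤ f S'')
    (S' : Finset V) (hS'card : S'.card = B) :
    (k : ℝ) * f S' ≤ (B : ℝ) * f S'' :=
  submodular_cardinality_scaling_general f hsub hempty k B hkB S'' hS''opt S' hS'card
end

section
/- Let G=(X,N) be an undirected graph. Construct the deterministic election instance with two candidates c_0, c_1: a voter v_x with score vector ⟨1,0⟩ for each vertex x ∈ X, a voter v_e with score vector ⟨0,2⟩ for each edge e ∈ N, and a directed edge from v_x to v_e whenever x is an endpoint of e. For any X' ⊆ X, let the seed set be S' = {v_x : x ∈ X'}, each seed sending the message m with m(0)=1 and m(1)=0. Then ΔMoV^S(S',M) = 2·e(X'), where e(X') is the number of edges of G with both endpoints in X'. -/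
open scoped Classical

section DkS

variable {X : Type*} [Fintype X] [DecidableEq X] (G : SimpleGraph X)
  [DecidableRel G.Adj] [Fintype G.edgeSet]

/-- Voters: a node for each vertex of `G` and a node for each edge of `G`. -/
abbrev DkSVoter := X ⊕ G.edgeSet

/-- A directed edge from `v_x` to `v_e` whenever `x` is an endpoint of `e`. -/
def DkSEdges : Set (DkSVoter G × DkSVoter G) :=
  { p | ∃ (x : X) (e : G.edgeSet), x ∈ (e : Sym2 X) ∧
      p.1 = Sum.inl x ∧ p.2 = Sum.inr e }

/-- Scores: vertex-nodes have ⟨1,0⟩, edge-nodes have ⟨0,2⟩. -/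
def DkSScores : DkSVoter G → Fin 2 → ℕ
  | Sum.inl _ => ![1, 0]
  | Sum.inr _ => ![0, 2]

/-- Seed set `{v_x : x ∈ X'}`. -/
def DkSSeeds (X' : Finset X) : Set (DkSVoter G) := { v | ∃ x ∈ X', v = Sum.inl x }

/-- Every seed sends the message (+1 on c₀, nothing on c₁). -/
def DkSMsg : DkSVoter G → Fin 2 → ℤ := fun _ => ![1, 0]

/-- e(X'): the number of edges of `G` with both endpoints in `X'`. -/
def edgesWithin (X' : Finset X) : ℕ :=
  (Finset.univ.filter fun e : G.edgeSet => ∀ x ∈ (e : Sym2 X), x ∈ X').card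

/-!
All scores are at most 2 and edge voters score 2, so ε = 1/3 as soon as `G` has an edge. An edge
voter `v_e` then ends with scores ⟨t, 4/3⟩, where `t ∈ {0, 1, 2}` counts the seeded endpoints of
`e`: it votes for c₀ iff both endpoints lie in `X'`, and for c₁ otherwise. Vertex voters vote for
c₀ whatever the seeding. Hence `MoV(S') = |X| + 2 e(X') - |N|`, and the unseeded election is the
case `X' = ∅`, where `e(∅) = 0`.
-/

open Finset

section Election

variable {V : Type*} [Fintype V] {k : ℕ}

theorem le_sup_sup (π : V → Fin k → ℕ) (v : V) (i : Fin k) :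
    π v i ≤ univ.sup fun v => univ.sup fun i => π v i :=
  (le_sup (f := fun i => π v i) (mem_univ i)).trans
    (le_sup (f := fun v => univ.sup fun i => π v i) (mem_univ v))

theorem eps_eq_of_le_of_eq {π : V → Fin k → ℕ} {n : ℕ} (hle : ∀ v i, π v i ≤ n)
    {v : V} {i : Fin k} (hv : π v i = n) : eps π = 1 / (1 + n) := by
  have hsup : (univ.sup fun v => univ.sup fun i => π v i) = n :=
    le_antisymm (Finset.sup_le fun v _ => Finset.sup_le fun i _ => hle v i)
      (hv ▸ le_sup_sup π v i)
  rw [eps, hsup]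

theorem eps_lt_one {π : V → Fin k → ℕ} {v : V} {i : Fin k} (hv : π v i ≠ 0) : eps π < 1 := by
  have hpos : (0 : ℚ) < (univ.sup fun v => univ.sup fun i => π v i : ℕ) := by
    exact_mod_cast (Nat.pos_of_ne_zero hv).trans_le (le_sup_sup π v i)
  rw [eps, div_lt_one (by positivity)]
  linarith

theorem finalScore_const_msg (Es : Set (V × V)) (π : V → Fin k → ℕ) (S : Set V)
    (μ : Fin k → ℤ) (v : V) (i : Fin k) :
    finalScore Es π S (fun _ => μ) v i = (1 - eps π) * π v i +
      #(univ.filter fun s => s ∈ S ∧ Reaches Es s v) * μ i := by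
  rw [finalScore, sum_const, nsmul_eq_mul]

variable {Es : Set (V × V)} {π : V → Fin 2 → ℕ} {S : Set V} {m : V → Fin 2 → ℤ}

theorem mem_finalVoters_zero_iff {v : V} :
    v ∈ finalVoters Es π S m 0 ↔ finalScore Es π S m v 1 < finalScore Es π S m v 0 := by
  simp [finalVoters, Fin.forall_fin_two]

theorem mem_finalVoters_one_iff {v : V} :
    v ∈ finalVoters Es π S m 1 ↔ finalScore Es π S m v 0 < finalScore Es π S m v 1 := by
  simp [finalVoters, Fin.forall_fin_two]

theorem MoV_fin_two :
    MoV Es π S m = #(finalVoters Es π S m 0) - (#(finalVoters Es π S m 1) : ℤ) := by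
  rw [MoV, show univ.erase (0 : Fin 2) = {1} by decide, sup_singleton]

end Election

theorem Sym2.card_filter_mem_le_two {α : Type*} [DecidableEq α] (s : Finset α) (z : Sym2 α) :
    #(s.filter (· ∈ z)) ≤ 2 :=
  calc #(s.filter (· ∈ z)) ≤ #z.toFinset :=
        card_le_card fun _ hx => Sym2.mem_toFinset.2 (mem_filter.1 hx).2
    _ ≤ 2 := by rw [Sym2.card_toFinset]; split_ifs <;> norm_num

theorem Sym2.card_filter_mem_eq_two_iff {α : Type*} [DecidableEq α] (s : Finset α) {z : Sym2 α}
    (hz : ¬ z.IsDiag) : #(s.filter (· ∈ z)) = 2 ↔ ∀ x ∈ z, x ∈ s := by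
  have hsub : s.filter (· ∈ z) ⊆ z.toFinset := fun _ hx => Sym2.mem_toFinset.2 (mem_filter.1 hx).2
  rw [← Sym2.card_toFinset_of_not_isDiag z hz]
  constructor
  · intro h x hx
    rw [← Sym2.mem_toFinset, ← eq_of_subset_of_card_le hsub h.ge] at hx
    exact (mem_filter.1 hx).1
  · intro h
    congr 1
    exact hsub.antisymm fun x hx => mem_filter.2 ⟨h x (Sym2.mem_toFinset.1 hx), Sym2.mem_toFinset.1 hx⟩

omit [Fintype X] [DecidableEq X] [DecidableRel G.Adj] [Fintype G.edgeSet] in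
theorem reaches_dkSEdges_iff {s v : DkSVoter G} :
    Reaches (DkSEdges G) s v ↔ s = v ∨ (s, v) ∈ DkSEdges G := by
  -- Every edge ends at an edge voter, which has no out-edges: the relation is vacuously transitive.
  have : IsTrans (DkSVoter G) fun a b => (a, b) ∈ DkSEdges G :=
    ⟨fun a b c ⟨_, _, _, _, hb⟩ ⟨_, _, _, hb', _⟩ => by simp_all⟩
  rw [Reaches, Relation.reflTransGen_eq_reflGen, Relation.reflGen_iff, eq_comm]

omit [Fintype X] [DecidableEq X] [DecidableRel G.Adj] [Fintype G.edgeSet] in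
theorem reaches_dkSEdges_inl_inr {x : X} {e : G.edgeSet} :
    Reaches (DkSEdges G) (Sum.inl x) (Sum.inr e) ↔ x ∈ (e : Sym2 X) := by
  rw [reaches_dkSEdges_iff]
  simp [DkSEdges]

omit [DecidableEq X] [DecidableRel G.Adj] in
theorem card_filter_dkSSeeds_reaches (X' : Finset X) (v : DkSVoter G) :
    #(univ.filter fun s => s ∈ DkSSeeds G X' ∧ Reaches (DkSEdges G) s v) =
      #(X'.filter fun x => Reaches (DkSEdges G) (Sum.inl x) v) := by
  rw [← card_map (Function.Embedding.inl : X ↪ DkSVoter G)]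
  congr 1
  ext s
  simp only [mem_filter, mem_univ, true_and, mem_map, Function.Embedding.inl_apply]
  constructor
  · rintro ⟨⟨x, hx, rfl⟩, h⟩
    exact ⟨x, ⟨hx, h⟩, rfl⟩
  · rintro ⟨x, ⟨hx, h⟩, rfl⟩
    exact ⟨⟨x, hx, rfl⟩, h⟩

-- Restated by `rfl` so that `Matrix.cons_val_*` apply: the vectors in `DkSScores` are elaborated
-- with a length literal that these simp lemmas do not unify with.
omit [Fintype X] [DecidableEq X] [DecidableRel G.Adj] [Fintype G.edgeSet] in
@[simp] theorem dkSScores_inl (x : X) : DkSScores G (Sum.inl x) = ![1, 0] := rfl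

omit [Fintype X] [DecidableEq X] [DecidableRel G.Adj] [Fintype G.edgeSet] in
@[simp] theorem dkSScores_inr (e : G.edgeSet) : DkSScores G (Sum.inr e) = ![0, 2] := rfl

omit [DecidableEq X] [DecidableRel G.Adj] in
theorem finalScore_dkS_zero (X' : Finset X) (v : DkSVoter G) :
    finalScore (DkSEdges G) (DkSScores G) (DkSSeeds G X') (DkSMsg G) v 0 =
      (1 - eps (DkSScores G)) * DkSScores G v 0 +
        #(X'.filter fun x => Reaches (DkSEdges G) (Sum.inl x) v) := by
  unfold DkSMsg
  rw [finalScore_const_msg, card_filter_dkSSeeds_reaches]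
  simp

omit [DecidableEq X] [DecidableRel G.Adj] in
theorem finalScore_dkS_one (X' : Finset X) (v : DkSVoter G) :
    finalScore (DkSEdges G) (DkSScores G) (DkSSeeds G X') (DkSMsg G) v 1 =
      (1 - eps (DkSScores G)) * DkSScores G v 1 := by
  unfold DkSMsg
  rw [finalScore_const_msg]
  simp

omit [DecidableEq X] [DecidableRel G.Adj] in
theorem eps_dkSScores_lt_one (x : X) : eps (DkSScores G) < 1 :=
  eps_lt_one (v := Sum.inl x) (i := 0) (by simp [DkSScores])

omit [DecidableEq X] [DecidableRel G.Adj] in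
theorem eps_dkSScores_eq (e : G.edgeSet) : eps (DkSScores G) = 1 / 3 := by
  rw [eps_eq_of_le_of_eq (n := 2) (v := Sum.inr e) (i := 1) _ (by simp [DkSScores])]
  · norm_num
  · rintro (x | e) i <;> fin_cases i <;> simp [DkSScores]

omit [DecidableEq X] [DecidableRel G.Adj] in
theorem finalScore_dkS_inl_zero_pos (X' : Finset X) (x : X) :
    0 < finalScore (DkSEdges G) (DkSScores G) (DkSSeeds G X') (DkSMsg G) (Sum.inl x) 0 := by
  rw [finalScore_dkS_zero, dkSScores_inl]
  norm_num
  exact add_pos_of_pos_of_nonneg (sub_pos.2 (eps_dkSScores_lt_one G x)) (Nat.cast_nonneg _)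

omit [DecidableEq X] [DecidableRel G.Adj] in
theorem finalScore_dkS_inl_one (X' : Finset X) (x : X) :
    finalScore (DkSEdges G) (DkSScores G) (DkSSeeds G X') (DkSMsg G) (Sum.inl x) 1 = 0 := by
  simp [finalScore_dkS_one]

omit [DecidableRel G.Adj] in
theorem finalScore_dkS_inr_zero (X' : Finset X) (e : G.edgeSet) :
    finalScore (DkSEdges G) (DkSScores G) (DkSSeeds G X') (DkSMsg G) (Sum.inr e) 0 =
      #(X'.filter (· ∈ (e : Sym2 X))) := by
  simp [finalScore_dkS_zero, reaches_dkSEdges_inl_inr]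

omit [DecidableEq X] [DecidableRel G.Adj] in
theorem finalScore_dkS_inr_one (X' : Finset X) (e : G.edgeSet) :
    finalScore (DkSEdges G) (DkSScores G) (DkSSeeds G X') (DkSMsg G) (Sum.inr e) 1 = 4 / 3 := by
  rw [finalScore_dkS_one, eps_dkSScores_eq G e, dkSScores_inr]
  norm_num

omit [DecidableRel G.Adj] in
theorem finalVoters_dkS_zero (X' : Finset X) :
    finalVoters (DkSEdges G) (DkSScores G) (DkSSeeds G X') (DkSMsg G) 0 =
      univ.disjSum (univ.filter fun e : G.edgeSet => ∀ x ∈ (e : Sym2 X), x ∈ X') := by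
  ext (x | e)
  · simpa [mem_finalVoters_zero_iff, finalScore_dkS_inl_one] using
      finalScore_dkS_inl_zero_pos G X' x
  · simp only [inr_mem_disjSum, mem_filter, mem_univ, true_and]
    rw [mem_finalVoters_zero_iff, finalScore_dkS_inr_zero, finalScore_dkS_inr_one,
      ← Sym2.card_filter_mem_eq_two_iff X' (G.not_isDiag_of_mem_edgeSet e.2)]
    have := Sym2.card_filter_mem_le_two X' (e : Sym2 X)
    interval_cases #(X'.filter (· ∈ (e : Sym2 X))) <;> norm_num

omit [DecidableRel G.Adj] in
theorem finalVoters_dkS_one (X' : Finset X) :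
    finalVoters (DkSEdges G) (DkSScores G) (DkSSeeds G X') (DkSMsg G) 1 =
      (∅ : Finset X).disjSum (univ.filter fun e : G.edgeSet => ¬ ∀ x ∈ (e : Sym2 X), x ∈ X') := by
  ext (x | e)
  · simpa [mem_finalVoters_one_iff, finalScore_dkS_inl_one] using
      (finalScore_dkS_inl_zero_pos G X' x).le
  · simp only [inr_mem_disjSum, mem_filter, mem_univ, true_and]
    rw [mem_finalVoters_one_iff, finalScore_dkS_inr_zero, finalScore_dkS_inr_one,
      ← Sym2.card_filter_mem_eq_two_iff X' (G.not_isDiag_of_mem_edgeSet e.2)]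
    have := Sym2.card_filter_mem_le_two X' (e : Sym2 X)
    interval_cases #(X'.filter (· ∈ (e : Sym2 X))) <;> norm_num
omit [DecidableRel G.Adj] in
theorem MoV_dkSSeeds (X' : Finset X) :
    MoV (DkSEdges G) (DkSScores G) (DkSSeeds G X') (DkSMsg G) =
      Fintype.card X + 2 * (edgesWithin G X' : ℤ) - Fintype.card G.edgeSet := by
  have hsplit := card_filter_add_card_filter_not (s := (univ : Finset G.edgeSet))
    (fun e : G.edgeSet => ∀ x ∈ (e : Sym2 X), x ∈ X')
  rw [MoV_fin_two, finalVoters_dkS_zero, finalVoters_dkS_one, card_disjSum, card_disjSum,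
    card_empty, card_univ, edgesWithin]
  rw [card_univ] at hsplit
  omega

omit [Fintype X] [DecidableEq X] [DecidableRel G.Adj] [Fintype G.edgeSet] in
theorem dkSSeeds_empty : DkSSeeds G ∅ = ∅ := by
  simp [DkSSeeds]

omit [DecidableRel G.Adj] in
theorem edgesWithin_empty : edgesWithin G ∅ = 0 := by
  simpa [edgesWithin] using fun z _ => ⟨_, Sym2.out_fst_mem z⟩

/-- Seeding `{v_x : x ∈ X'}` with message (+1 on c₀) yields ΔMoV^S = 2·e(X'). -/
theorem deltaMoV_eq_twice_densest (X' : Finset X) :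
    MoV (DkSEdges G) (DkSScores G) (DkSSeeds G X') (DkSMsg G) -
      MoV (DkSEdges G) (DkSScores G) (∅ : Set (DkSVoter G)) (DkSMsg G)
    = 2 * (edgesWithin G X' : ℤ) := by
  rw [← dkSSeeds_empty, MoV_dkSSeeds, MoV_dkSSeeds, edgesWithin_empty]
  ring

end DkS
end

section
/- Let N be a set of n ≥ 1 elements and X = {x_1,…,x_g} a collection of subsets of N with 1 ≤ h < g, and assume that no element of N belongs to every set of X. Construct the directed graph with: a node v_{z,j} for each element z ∈ N and each j ∈ {1,…,n²g²}; for each set x ∈ X, two nodes v_{x,1} and v_{x,2} with an edge from v_{x,1} to v_{x,2}; and an edge from v_{x,2} to v_{z,j} for every z ∈ N∖x and every j ∈ {1,…,n²g²}. The seeds are exactly the nodes v_{x,1} for x ∈ X. Then max{ ΔI^-(E') : E' ⊆ E, |E'| ≤ g−h } = (g−h) + n²g² · max{ |⋂_{x∈J} x| : J ⊆ X, |J| = h }. -/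
/-!
With all edges present every node is influenced, since no element lies in every set; so
ΔI⁻(E') counts the nodes cut off by `E'`: the nodes `v_{x,2}` whose seed edge `v_{x,1} → v_{x,2}`
is removed, and the copies `v_{z,j}` that no surviving set `x ∌ z` still reaches. A copy is cut
off either because `z` lies in every set whose seed edge survives, or because one of its own
in-edges was removed. At least `h` seed edges survive, so the first kind contributes at most
n²g² · |⋂_{x∈J} x| for some `h`-set `J`; the nodes of the second kind and the `v_{x,2}` are
distinct targets of removed edges, so they number at most |E'| ≤ g − h. Removing the seed edges
of the sets outside an optimal `J` attains the bound.
-/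

open scoped Classical

section MSI

variable (α : Type*) (g n : ℕ)

/-- Nodes: n²g² copies `v_{z,j}` of each element `z`, and a pair `v_{x,1}` (`false`),
`v_{x,2}` (`true`) for each set `x` of the collection. -/
abbrev MSIVoter := (α × Fin (n ^ 2 * g ^ 2)) ⊕ (Fin g × Bool)

variable {α g n}

/-- Edges: `v_{x,1} → v_{x,2}` for each set `x`, and `v_{x,2} → v_{z,j}` for every
element `z ∉ x` and every copy `j`. -/
def MSIEdges (X : Fin g → Finset α) : Set (MSIVoter α g n × MSIVoter α g n) :=
  { p | (∃ x : Fin g, p.1 = Sum.inr (x, false) ∧ p.2 = Sum.inr (x, true)) ∨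
        (∃ (x : Fin g) (z : α) (j : Fin (n ^ 2 * g ^ 2)), z ∉ X x ∧
          p.1 = Sum.inr (x, true) ∧ p.2 = Sum.inl (z, j)) }

/-- Seeds: exactly the nodes `v_{x,1}`. -/
def MSISeeds : Set (MSIVoter α g n) := { v | ∃ x : Fin g, v = Sum.inr (x, false) }


theorem chi_sub_chi_eq_card_compl {V : Type*} [Fintype V] [DecidableEq V] {E F : Set (V × V)}
    {S : Set V} (hE : influenced E S = Finset.univ) :
    (chi E S : ℤ) - chi F S = ((influenced F S)ᶜ).card := by
  rw [chi, chi, hE, Finset.card_univ, ← Finset.card_add_card_compl (influenced F S)]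
  push_cast
  ring

theorem Finset.card_filter_univ_fst {β γ : Type*} [Fintype β] [Fintype γ] (P : β → Prop)
    [DecidablePred P] :
    (Finset.univ.filter fun q : β × γ => P q.1).card =
      (Finset.univ.filter P).card * Fintype.card γ := by
  rw [← Finset.univ_product_univ, Finset.filter_product_left, Finset.card_product,
    Finset.card_univ]

theorem Finset.le_sup_powersetCard_of_antitone {ι β : Type*} [Fintype ι] [SemilatticeSup β]
    [OrderBot β] {f : Finset ι → β} (hf : Antitone f) {L : Finset ι} {h : ℕ}
    (hL : h ≤ L.card) : f L ≤ (Finset.powersetCard h Finset.univ).sup f := by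
  obtain ⟨J, hJL, hJ⟩ := Finset.exists_subset_card_eq hL
  exact (hf hJL).trans (Finset.le_sup (Finset.mem_powersetCard.2 ⟨Finset.subset_univ J, hJ⟩))

namespace MSI

variable {α : Type*} {g n : ℕ}

def seedEdge (x : Fin g) : MSIVoter α g n × MSIVoter α g n :=
  (Sum.inr (x, false), Sum.inr (x, true))

def copyEdge (x : Fin g) (p : α × Fin (n ^ 2 * g ^ 2)) : MSIVoter α g n × MSIVoter α g n :=
  (Sum.inr (x, true), Sum.inl p)

theorem seedEdge_injective : Function.Injective (seedEdge : Fin g → MSIVoter α g n × _) := by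
  intro x y hxy
  simpa [seedEdge] using hxy

theorem seedEdge_ne_copyEdge (x y : Fin g) (p : α × Fin (n ^ 2 * g ^ 2)) :
    seedEdge x ≠ copyEdge y p := by
  simp [seedEdge, copyEdge]

theorem seedEdge_mem_msiEdges (X : Fin g → Finset α) (x : Fin g) :
    seedEdge (α := α) (n := n) x ∈ MSIEdges X :=
  Or.inl ⟨x, rfl, rfl⟩

theorem copyEdge_mem_msiEdges_iff (X : Fin g → Finset α) (x : Fin g)
    (p : α × Fin (n ^ 2 * g ^ 2)) : copyEdge x p ∈ MSIEdges X ↔ p.1 ∉ X x := by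
  refine ⟨?_, fun hp => Or.inr ⟨x, p.1, p.2, hp, rfl, rfl⟩⟩
  rintro (⟨y, -, h⟩ | ⟨y, z, j, hz, h₁, h₂⟩)
  · simp [copyEdge] at h
  · simp only [copyEdge, Sum.inr.injEq, Prod.mk.injEq, Sum.inl.injEq] at h₁ h₂
    obtain ⟨rfl, -⟩ := h₁
    rwa [h₂]

variable {X : Fin g → Finset α} {F : Set (MSIVoter α g n × MSIVoter α g n)}

theorem reaches_from_seed_iff (hF : F ⊆ MSIEdges X) (x : Fin g) (v : MSIVoter α g n) :
    Reaches F (Sum.inr (x, false)) v ↔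
      v = Sum.inr (x, false) ∨ (v = Sum.inr (x, true) ∧ seedEdge x ∈ F) ∨
        ∃ p, v = Sum.inl p ∧ seedEdge x ∈ F ∧ copyEdge x p ∈ F := by
  refine ⟨fun h => ?_, ?_⟩
  · induction h with
    | refl => exact Or.inl rfl
    | tail _ hbc ih =>
      rcases hF hbc with ⟨y, hb, hc⟩ | ⟨y, z, j, -, hb, hc⟩ <;>
        rcases ih with rfl | ⟨rfl, h₁⟩ | ⟨p, rfl, -, -⟩ <;>
        simp only [Sum.inr.injEq, Prod.mk.injEq, reduceCtorEq, and_false, and_true] at hb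
      · subst hb hc
        exact Or.inr (Or.inl ⟨rfl, hbc⟩)
      · subst hb hc
        exact Or.inr (Or.inr ⟨(z, j), rfl, h₁, hbc⟩)
  · rintro (rfl | ⟨rfl, h₁⟩ | ⟨p, rfl, h₁, h₂⟩)
    · exact .refl
    · exact .single h₁
    · exact (Relation.ReflTransGen.single h₁).tail h₂

def cutOutside (J : Finset (Fin g)) : Set (MSIVoter α g n × MSIVoter α g n) :=
  seedEdge '' ↑Jᶜ

theorem cutOutside_subset_msiEdges (J : Finset (Fin g)) :
    (cutOutside J : Set (MSIVoter α g n × MSIVoter α g n)) ⊆ MSIEdges X := by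
  rintro _ ⟨x, -, rfl⟩
  exact seedEdge_mem_msiEdges X x

theorem ncard_cutOutside (J : Finset (Fin g)) :
    (cutOutside J : Set (MSIVoter α g n × MSIVoter α g n)).ncard = g - J.card := by
  rw [cutOutside, Set.ncard_image_of_injective _ seedEdge_injective, Set.ncard_coe_finset,
    Finset.card_compl, Fintype.card_fin]

theorem seedEdge_mem_cutOutside_iff {J : Finset (Fin g)} {x : Fin g} :
    seedEdge x ∈ (cutOutside J : Set (MSIVoter α g n × MSIVoter α g n)) ↔ x ∉ J := by
  simp [cutOutside, seedEdge_injective.mem_set_image]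

theorem copyEdge_notMem_cutOutside (J : Finset (Fin g)) (x : Fin g)
    (p : α × Fin (n ^ 2 * g ^ 2)) : copyEdge x p ∉ (cutOutside J : Set (MSIVoter α g n × _)) := by
  rintro ⟨y, -, h⟩
  exact seedEdge_ne_copyEdge y x p h

noncomputable def cutSets (E' : Set (MSIVoter α g n × MSIVoter α g n)) : Finset (Fin g) :=
  Finset.univ.filter fun x => seedEdge x ∈ E'

theorem cutSets_cutOutside (J : Finset (Fin g)) :
    cutSets (cutOutside J : Set (MSIVoter α g n × MSIVoter α g n)) = Jᶜ := by
  ext x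
  simp [cutSets, seedEdge_mem_cutOutside_iff]

variable [Fintype α]

theorem mem_influenced_msiSeeds_iff (v : MSIVoter α g n) :
    v ∈ influenced F MSISeeds ↔ ∃ x, Reaches F (Sum.inr (x, false)) v := by
  simp [influenced, MSISeeds]

theorem inr_false_mem_influenced (x : Fin g) :
    Sum.inr (x, false) ∈ influenced F (MSISeeds : Set (MSIVoter α g n)) :=
  (mem_influenced_msiSeeds_iff _).2 ⟨x, .refl⟩

theorem inr_true_mem_influenced_iff (hF : F ⊆ MSIEdges X) (x : Fin g) :
    Sum.inr (x, true) ∈ influenced F (MSISeeds : Set (MSIVoter α g n)) ↔ seedEdge x ∈ F := by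
  simp [mem_influenced_msiSeeds_iff, reaches_from_seed_iff hF]

theorem inl_mem_influenced_iff (hF : F ⊆ MSIEdges X) (p : α × Fin (n ^ 2 * g ^ 2)) :
    Sum.inl p ∈ influenced F (MSISeeds : Set (MSIVoter α g n)) ↔
      ∃ x, seedEdge x ∈ F ∧ copyEdge x p ∈ F := by
  simp [mem_influenced_msiSeeds_iff, reaches_from_seed_iff hF]

theorem influenced_msiEdges_eq_univ (hnc : ∀ z : α, ∃ x : Fin g, z ∉ X x) :
    influenced (MSIEdges X) (MSISeeds : Set (MSIVoter α g n)) = Finset.univ := by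
  ext (p | ⟨x, _ | _⟩)
  · obtain ⟨x, hx⟩ := hnc p.1
    simpa [inl_mem_influenced_iff subset_rfl] using
      ⟨x, seedEdge_mem_msiEdges X x, (copyEdge_mem_msiEdges_iff X x p).2 hx⟩
  · simpa using inr_false_mem_influenced x
  · simpa [inr_true_mem_influenced_iff subset_rfl] using seedEdge_mem_msiEdges X x

noncomputable def hitCopies (E' : Set (MSIVoter α g n × MSIVoter α g n)) :
    Finset (α × Fin (n ^ 2 * g ^ 2)) :=
  Finset.univ.filter fun p => ∃ x, copyEdge x p ∈ E'

theorem card_cutSets_add_card_hitCopies_le_ncard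
    (E' : Set (MSIVoter α g n × MSIVoter α g n)) :
    (cutSets E').card + (hitCopies E').card ≤ E'.ncard := by
  have htargets : (hitCopies E').disjSum
      ((cutSets E').map ⟨fun x => (x, true), fun _ _ h => congrArg Prod.fst h⟩) ⊆
      E'.toFinset.image Prod.snd := by
    rintro (p | ⟨x, b⟩) hv <;> simp only [Finset.inl_mem_disjSum, Finset.inr_mem_disjSum,
      Finset.mem_map, Finset.mem_filter, Finset.mem_univ, true_and, cutSets, hitCopies] at hv
    · obtain ⟨x, hx⟩ := hv
      exact Finset.mem_image.2 ⟨copyEdge x p, Set.mem_toFinset.2 hx, rfl⟩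
    · obtain ⟨x, hx, h⟩ := hv
      obtain ⟨rfl, rfl⟩ := Prod.ext_iff.1 h
      exact Finset.mem_image.2 ⟨seedEdge x, Set.mem_toFinset.2 hx, rfl⟩
  calc (cutSets E').card + (hitCopies E').card = (_ : Finset (MSIVoter α g n)).card := by
        rw [Finset.card_disjSum, Finset.card_map, add_comm]
    _ ≤ (E'.toFinset.image Prod.snd).card := Finset.card_le_card htargets
    _ ≤ E'.toFinset.card := Finset.card_image_le
    _ = E'.ncard := (Set.ncard_eq_toFinset_card' E').symm

variable [DecidableEq α]

noncomputable def lostCopies (X : Fin g → Finset α) (E' : Set (MSIVoter α g n × MSIVoter α g n)) :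
    Finset (α × Fin (n ^ 2 * g ^ 2)) :=
  Finset.univ.filter fun p => ∀ x, seedEdge x ∉ E' → p.1 ∉ X x → copyEdge x p ∈ E'

theorem card_compl_influenced_sdiff (E' : Set (MSIVoter α g n × MSIVoter α g n)) :
    ((influenced (MSIEdges X \ E') MSISeeds)ᶜ).card =
      (cutSets E').card + (lostCopies X E').card := by
  rw [Finset.compl_eq_univ_sdiff, ← Finset.filter_notMem_eq_sdiff]
  simp only [cutSets, lostCopies, Finset.card_filter, Fintype.sum_sum_type,
    Fintype.sum_prod_type, Fintype.sum_bool, inl_mem_influenced_iff Set.sdiff_subset,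
    inr_true_mem_influenced_iff Set.sdiff_subset, inr_false_mem_influenced, Set.mem_sdiff,
    seedEdge_mem_msiEdges, copyEdge_mem_msiEdges_iff]
  simp [add_comm]

theorem influence_decrease_eq (hnc : ∀ z : α, ∃ x : Fin g, z ∉ X x)
    (E' : Set (MSIVoter α g n × MSIVoter α g n)) :
    (chi (MSIEdges X) (MSISeeds : Set (MSIVoter α g n)) : ℤ) -
        chi (MSIEdges X \ E') MSISeeds =
      (cutSets E').card + (lostCopies X E').card := by
  rw [chi_sub_chi_eq_card_compl (influenced_msiEdges_eq_univ hnc), card_compl_influenced_sdiff]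
  push_cast
  rfl

theorem lostCopies_cutOutside (J : Finset (Fin g)) :
    lostCopies X (cutOutside J : Set (MSIVoter α g n × MSIVoter α g n)) =
      Finset.univ.filter fun p => ∀ x ∈ J, p.1 ∈ X x := by
  ext p
  simp [lostCopies, seedEdge_mem_cutOutside_iff, copyEdge_notMem_cutOutside]

theorem influence_decrease_cutOutside (hnc : ∀ z : α, ∃ x : Fin g, z ∉ X x)
    (J : Finset (Fin g)) :
    (chi (MSIEdges X) (MSISeeds : Set (MSIVoter α g n)) : ℤ) -
        chi (MSIEdges X \ (cutOutside J : Set (MSIVoter α g n × MSIVoter α g n))) MSISeeds =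
      ((g - J.card : ℕ) : ℤ) + ((n ^ 2 * g ^ 2 : ℕ) : ℤ) *
        (Finset.univ.filter fun z : α => ∀ x ∈ J, z ∈ X x).card := by
  rw [influence_decrease_eq hnc, cutSets_cutOutside, lostCopies_cutOutside,
    Finset.card_filter_univ_fst (fun z => ∀ x ∈ J, z ∈ X x), Finset.card_compl,
    Fintype.card_fin, Fintype.card_fin]
  push_cast
  ring

theorem card_lostCopies_le (E' : Set (MSIVoter α g n × MSIVoter α g n)) :
    (lostCopies X E').card ≤
      (n ^ 2 * g ^ 2) * (Finset.univ.filter fun z : α => ∀ x ∈ (cutSets E')ᶜ, z ∈ X x).card +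
        (hitCopies E').card := by
  have hprod := Finset.card_filter_univ_fst (γ := Fin (n ^ 2 * g ^ 2))
    (fun z : α => ∀ x ∈ (cutSets E')ᶜ, z ∈ X x)
  rw [Fintype.card_fin] at hprod
  rw [mul_comm (n ^ 2 * g ^ 2), ← hprod]
  refine (Finset.card_le_card fun p hp => ?_).trans (Finset.card_union_le _ _)
  simp only [lostCopies, hitCopies, cutSets, Finset.mem_union, Finset.mem_filter,
    Finset.mem_compl, Finset.mem_univ, true_and] at hp ⊢
  by_contra! h
  obtain ⟨⟨x, hx, hpx⟩, hcut⟩ := h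
  exact hcut x (hp x hx hpx)

theorem influence_decrease_le (hnc : ∀ z : α, ∃ x : Fin g, z ∉ X x) {h : ℕ} (hhg : h ≤ g)
    {E' : Set (MSIVoter α g n × MSIVoter α g n)} (hE' : E'.ncard ≤ g - h) :
    (chi (MSIEdges X) (MSISeeds : Set (MSIVoter α g n)) : ℤ) -
        chi (MSIEdges X \ E') MSISeeds ≤
      ((g - h : ℕ) : ℤ) + ((n ^ 2 * g ^ 2 : ℕ) : ℤ) *
        (((Finset.powersetCard h Finset.univ).sup
            fun J => (Finset.univ.filter fun z : α => ∀ x ∈ J, z ∈ X x).card : ℕ) : ℤ) := by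
  have hcut := card_cutSets_add_card_hitCopies_le_ncard E'
  have huncut : h ≤ (cutSets E')ᶜ.card := by
    rw [Finset.card_compl, Fintype.card_fin]
    omega
  have hanti : Antitone fun J : Finset (Fin g) =>
      (Finset.univ.filter fun z : α => ∀ x ∈ J, z ∈ X x).card := fun J L hJL =>
    Finset.card_le_card (Finset.monotone_filter_right _ fun _ _ hz x hx => hz x (hJL hx))
  have hinter := Nat.mul_le_mul_left (n ^ 2 * g ^ 2)
    (Finset.le_sup_powersetCard_of_antitone hanti huncut)
  have hlost := card_lostCopies_le (X := X) E'
  rw [influence_decrease_eq hnc]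
  norm_cast
  omega

end MSI

theorem max_influence_decrease_eq_msi_general {α : Type*} [Fintype α] [DecidableEq α]
    (n g h : ℕ) (hhg : h < g)
    (X : Fin g → Finset α) (hnc : ∀ z : α, ∃ x : Fin g, z ∉ X x) :
    IsGreatest
      { d : ℤ | ∃ E' : Set (MSIVoter α g n × MSIVoter α g n),
          E' ⊆ MSIEdges X ∧ E'.ncard ≤ g - h ∧
          d = (chi (MSIEdges X) (MSISeeds : Set (MSIVoter α g n)) : ℤ) -
                (chi (MSIEdges X \ E') (MSISeeds : Set (MSIVoter α g n)) : ℤ) }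
      (((g - h : ℕ) : ℤ) + ((n ^ 2 * g ^ 2 : ℕ) : ℤ) *
        (((Finset.powersetCard h (Finset.univ : Finset (Fin g))).sup
            fun J => (Finset.univ.filter fun z : α => ∀ x ∈ J, z ∈ X x).card : ℕ) : ℤ)) := by
  obtain ⟨J, hJ, hJmax⟩ := Finset.exists_mem_eq_sup (Finset.powersetCard h Finset.univ)
    (Finset.powersetCard_nonempty.2 (by simpa using hhg.le))
    fun J => (Finset.univ.filter fun z : α => ∀ x ∈ J, z ∈ X x).card
  have hJcard : J.card = h := (Finset.mem_powersetCard.1 hJ).2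
  refine ⟨⟨MSI.cutOutside J, MSI.cutOutside_subset_msiEdges J, ?_, ?_⟩, ?_⟩
  · rw [MSI.ncard_cutOutside, hJcard]
  · rw [MSI.influence_decrease_cutOutside hnc, hJcard, hJmax]
  · rintro _ ⟨E', -, hE', rfl⟩
    exact MSI.influence_decrease_le hnc hhg.le hE'

/-- The maximum of ΔI⁻(E') over edge sets E' ⊆ E with |E'| ≤ g−h equals
(g−h) + n²g²·max{ |⋂_{x∈J} x| : J ⊆ X, |J| = h }. -/
theorem max_influence_decrease_eq_msi {α : Type*} [Fintype α] [DecidableEq α]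
    (n g h : ℕ) (hcard : Fintype.card α = n) (hn : 1 ≤ n) (hh : 1 ≤ h) (hhg : h < g)
    (X : Fin g → Finset α) (hnc : ∀ z : α, ∃ x : Fin g, z ∉ X x) :
    IsGreatest
      { d : ℤ | ∃ E' : Set (MSIVoter α g n × MSIVoter α g n),
          E' ⊆ MSIEdges X ∧ E'.ncard ≤ g - h ∧
          d = (chi (MSIEdges X) (MSISeeds : Set (MSIVoter α g n)) : ℤ) -
                (chi (MSIEdges X \ E') (MSISeeds : Set (MSIVoter α g n)) : ℤ) }
      (((g - h : ℕ) : ℤ) + ((n ^ 2 * g ^ 2 : ℕ) : ℤ) *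
        (((Finset.powersetCard h (Finset.univ : Finset (Fin g))).sup
            fun J => (Finset.univ.filter fun z : α => ∀ x ∈ J, z ∈ X x).card : ℕ) : ℤ)) :=
  max_influence_decrease_eq_msi_general n g h hhg X hnc

end MSI
end

section
/- Let N be a set of n ≥ 1 elements and X = {x_1,…,x_g} a collection of subsets of N with 1 ≤ h < g. Construct the directed graph with: a node v_{z,j} for each element z ∈ N and each j ∈ {1,…,n²g²}; for each set x ∈ X, two nodes v_{x,1} and v_{x,2} with an edge from v_{x,1} to v_{x,2}; and an edge from v_{x,2} to v_{z,j} for every z ∈ N∖x and every j ∈ {1,…,n²g²}. Consider the deterministic election instance on this graph with two candidates c_0, c_1, where every voter has score vector ⟨1,0⟩, the seeds are exactly the nodes v_{x,1}, and every seed sends the message m with m(0) = −1 and m(1) = 0. Then for every E' ⊆ E, ΔMoV^-(E') = 2·ΔI^-(E'). -/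
/-!
Since every voter starts at ⟨1, 0⟩, ε = 1/2 and a voter reached by k seeds ends at
⟨1/2 - k, 0⟩: it votes c₁ when influenced and c₀ otherwise. Hence on any graph
MoV = |V| - 2χ, and subtracting this identity for E and for E ∖ E' gives the claim.
-/

open scoped Classical

section MSI

variable (α : Type*) (g n : ℕ)

variable {α g n}

/-- Every voter has score vector ⟨1,0⟩. -/
def MSIScores : MSIVoter α g n → Fin 2 → ℕ := fun _ => ![1, 0]

/-- Every seed sends the message (−1 on c₀, nothing on c₁). -/
def MSIMsg : MSIVoter α g n → Fin 2 → ℤ := fun _ => ![-1, 0]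

section TwoCandidates

variable {V : Type*} [Fintype V]

noncomputable def seedsReaching (Es : Set (V × V)) (S : Set V) (v : V) : Finset V :=
  Finset.univ.filter (fun s => s ∈ S ∧ Reaches Es s v)

theorem seedsReaching_card_eq_zero_iff (Es : Set (V × V)) (S : Set V) (v : V) :
    (seedsReaching Es S v).card = 0 ↔ v ∉ influenced Es S := by
  simp [seedsReaching, influenced, Finset.filter_eq_empty_iff]

theorem eps_const_one_zero [Nonempty V] : eps (fun _ : V => ![1, 0]) = 1 / 2 := by
  have hmax : (Finset.univ.sup fun i => (![1, 0] : Fin 2 → ℕ) i) = 1 := by decide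
  simp only [eps, Finset.sup_const Finset.univ_nonempty, hmax]
  norm_num

theorem finalScore_zero (Es : Set (V × V)) (S : Set V) (v : V) :
    finalScore Es (fun _ => ![1, 0]) S (fun _ => ![-1, 0]) v 0
      = 1 / 2 - ((seedsReaching Es S v).card : ℚ) := by
  have : Nonempty V := ⟨v⟩
  simp only [finalScore, eps_const_one_zero, Matrix.cons_val_zero, Nat.cast_one, mul_one,
    Int.reduceNeg, Int.cast_neg, Int.cast_one, Finset.sum_neg_distrib, Finset.sum_const,
    nsmul_eq_mul, seedsReaching]
  ring

theorem finalScore_one (Es : Set (V × V)) (S : Set V) (v : V) :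
    finalScore Es (fun _ => ![1, 0]) S (fun _ => ![-1, 0]) v 1 = 0 := by
  simp [finalScore]

theorem mem_finalVoters_fin_two_iff (Es : Set (V × V)) (π : V → Fin 2 → ℕ) (S : Set V)
    (m : V → Fin 2 → ℤ) {c d : Fin 2} (hcd : d ≠ c) (v : V) :
    v ∈ finalVoters Es π S m c ↔ finalScore Es π S m v d < finalScore Es π S m v c := by
  fin_cases c <;> fin_cases d <;> simp_all [finalVoters, Fin.forall_fin_two]

theorem half_sub_natCast_pos_iff (c : ℕ) : 0 < (1 / 2 - c : ℚ) ↔ c = 0 := by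
  rcases Nat.eq_zero_or_pos c with rfl | hc
  · norm_num
  · have : (1 : ℚ) ≤ c := by exact_mod_cast hc
    exact ⟨fun _ => by linarith, fun h => by omega⟩

theorem half_sub_natCast_neg_iff (c : ℕ) : (1 / 2 - c : ℚ) < 0 ↔ c ≠ 0 := by
  rcases Nat.eq_zero_or_pos c with rfl | hc
  · norm_num
  · have : (1 : ℚ) ≤ c := by exact_mod_cast hc
    exact ⟨fun _ => hc.ne', fun _ => by linarith⟩

theorem finalVoters_zero (Es : Set (V × V)) (S : Set V) :
    finalVoters Es (fun _ => ![1, 0]) S (fun _ => ![-1, 0]) 0 = (influenced Es S)ᶜ := by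
  ext v
  rw [mem_finalVoters_fin_two_iff _ _ _ _ one_ne_zero, finalScore_zero, finalScore_one,
    half_sub_natCast_pos_iff, seedsReaching_card_eq_zero_iff, Finset.mem_compl]

theorem finalVoters_one (Es : Set (V × V)) (S : Set V) :
    finalVoters Es (fun _ => ![1, 0]) S (fun _ => ![-1, 0]) 1 = influenced Es S := by
  ext v
  rw [mem_finalVoters_fin_two_iff _ _ _ _ zero_ne_one, finalScore_zero, finalScore_one,
    half_sub_natCast_neg_iff, Ne, seedsReaching_card_eq_zero_iff, not_not]

theorem MoV_eq_card_sub_two_mul_chi (Es : Set (V × V)) (S : Set V) :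
    MoV Es (fun _ : V => ![1, 0]) S (fun _ => ![-1, 0])
      = (Fintype.card V : ℤ) - 2 * (chi Es S : ℤ) := by
  have hrest : Finset.univ.erase (0 : Fin 2) = {1} := by decide
  rw [MoV, hrest, Finset.sup_singleton, finalVoters_zero, finalVoters_one, Finset.card_compl, chi]
  have := Finset.card_le_univ (influenced Es S)
  omega

end TwoCandidates

theorem deltaMoV_eq_twice_deltaI_general {α : Type*} [Fintype α] (n g : ℕ)
    (X : Fin g → Finset α) :
    ∀ E' : Set (MSIVoter α g n × MSIVoter α g n), E' ⊆ MSIEdges X →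
      MoV (MSIEdges X \ E') MSIScores (MSISeeds : Set (MSIVoter α g n)) MSIMsg -
        MoV (MSIEdges X) MSIScores (MSISeeds : Set (MSIVoter α g n)) MSIMsg
      = 2 * ((chi (MSIEdges X) (MSISeeds : Set (MSIVoter α g n)) : ℤ) -
              (chi (MSIEdges X \ E') (MSISeeds : Set (MSIVoter α g n)) : ℤ)) := by
  intro E' _
  unfold MSIScores MSIMsg
  rw [MoV_eq_card_sub_two_mul_chi, MoV_eq_card_sub_two_mul_chi]
  ring

/-- In the two-candidate election on the MSI graph, where every voter has scores ⟨1,0⟩ and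
every seed sends −1 on c₀, removing any edge set E' ⊆ E gives ΔMoV⁻(E') = 2·ΔI⁻(E'). -/
theorem deltaMoV_eq_twice_deltaI {α : Type*} [Fintype α] [DecidableEq α]
    (n g h : ℕ) (hcard : Fintype.card α = n) (hn : 1 ≤ n) (hh : 1 ≤ h) (hhg : h < g)
    (X : Fin g → Finset α) :
    ∀ E' : Set (MSIVoter α g n × MSIVoter α g n), E' ⊆ MSIEdges X →
      MoV (MSIEdges X \ E') MSIScores (MSISeeds : Set (MSIVoter α g n)) MSIMsg -
        MoV (MSIEdges X) MSIScores (MSISeeds : Set (MSIVoter α g n)) MSIMsg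
      = 2 * ((chi (MSIEdges X) (MSISeeds : Set (MSIVoter α g n)) : ℤ) -
              (chi (MSIEdges X \ E') (MSISeeds : Set (MSIVoter α g n)) : ℤ)) :=
  deltaMoV_eq_twice_deltaI_general n g X

end MSI
end

section
/- Let G=(X,N) be an undirected graph with g = |X| ≥ 1 vertices and n = |N| ≥ 2 edges. Construct the deterministic election instance with three candidates c_0, c_1, c_2: a directed line L_1 of ng−g nodes, each with score vector ⟨2,0,1⟩, whose first node is the unique seed, sending the message +1 on c_2; for each vertex x ∈ X a node v_x with score vector ⟨2,0,1⟩ and an edge from the last node of L_1 to v_x; for each edge z ∈ N of G a directed line L_z of g nodes, each with score vector ⟨0,2,1⟩, with an edge from v_x to the first node of L_z for each endpoint x of z; and n²g² isolated nodes with score vector ⟨2,1,0⟩ together with n²g² isolated nodes with score vector ⟨1,2,0⟩. Then max{ ΔMoV^-(E') : E' ⊆ E } = α(G), the maximum cardinality of an independent set of G. -/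
open scoped Classical

section IndepSet

variable {X : Type*} [Fintype X] [DecidableEq X]
  (G : SimpleGraph X) [DecidableRel G.Adj] [Fintype G.edgeSet] (n g : ℕ)

/-- Voters: the line L₁ of ng−g nodes, a node `v_x` for each vertex of `G`, a line L_z of
g nodes for each edge `z` of `G`, and 2·n²g² isolated nodes of two kinds. -/
abbrev ISVoter :=
  Fin (n * g - g) ⊕ (X ⊕ ((G.edgeSet × Fin g) ⊕ (Fin (n ^ 2 * g ^ 2) ⊕ Fin (n ^ 2 * g ^ 2))))

/-- Edges: L₁ is a directed line; its last node points to every `v_x`; `v_x` points to the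
first node of L_z whenever `x` is an endpoint of `z`; each L_z is a directed line. -/
def ISEdges : Set (ISVoter G n g × ISVoter G n g) :=
  { p | (∃ i j : Fin (n * g - g), (i : ℕ) + 1 = (j : ℕ) ∧
          p.1 = Sum.inl i ∧ p.2 = Sum.inl j) ∨
        (∃ (i : Fin (n * g - g)) (x : X), (i : ℕ) + 1 = n * g - g ∧
          p.1 = Sum.inl i ∧ p.2 = Sum.inr (Sum.inl x)) ∨
        (∃ (x : X) (z : G.edgeSet) (j : Fin g), x ∈ (z : Sym2 X) ∧ (j : ℕ) = 0 ∧
          p.1 = Sum.inr (Sum.inl x) ∧ p.2 = Sum.inr (Sum.inr (Sum.inl (z, j)))) ∨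
        (∃ (z : G.edgeSet) (i j : Fin g), (i : ℕ) + 1 = (j : ℕ) ∧
          p.1 = Sum.inr (Sum.inr (Sum.inl (z, i))) ∧
          p.2 = Sum.inr (Sum.inr (Sum.inl (z, j)))) }

/-- Scores: L₁ and the `v_x` have ⟨2,0,1⟩; the L_z have ⟨0,2,1⟩; the isolated nodes have
⟨2,1,0⟩ and ⟨1,2,0⟩ respectively. -/
def ISScores : ISVoter G n g → Fin 3 → ℕ
  | Sum.inl _ => ![2, 0, 1]
  | Sum.inr (Sum.inl _) => ![2, 0, 1]
  | Sum.inr (Sum.inr (Sum.inl _)) => ![0, 2, 1]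
  | Sum.inr (Sum.inr (Sum.inr (Sum.inl _))) => ![2, 1, 0]
  | Sum.inr (Sum.inr (Sum.inr (Sum.inr _))) => ![1, 2, 0]

/-- The unique seed is the first node of L₁. -/
def ISSeeds : Set (ISVoter G n g) :=
  { v | ∃ i : Fin (n * g - g), (i : ℕ) = 0 ∧ v = Sum.inl i }

/-- The seed sends a single positive news article on c₂. -/
def ISMsg : ISVoter G n g → Fin 3 → ℤ := fun _ => ![0, 0, 1]

/-! With `ε = 1/3`, a voter reached by the seed's message gains `1` on `c₂` and switches to `c₂`;
an unreached one keeps its initial favourite: `c₀` on `L₁` and the `v_x`, `c₁` on the lines `L_z`.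
The isolated voters keep `c₁` ahead of `c₂`, so the margin is the number of unreached nodes of
`L₁` and of the `v_x` minus the number of unreached nodes of the `L_z`; it is `0` for the full
edge set.

Removing the edges into `{v_x | x ∈ I}` for an independent set `I` leaves exactly these `v_x`
unreached, while every `L_z` is still reached through an endpoint of `z` outside `I`: the margin
becomes `|I|`. Conversely, if a node of `L₁` is unreached then so is everything behind it and the
margin is at most `0`. Otherwise the unreached `v_x` either form an independent set, or contain
both ends of an edge `z`, and then the `g` unreached nodes of `L_z` cancel them. -/

theorem Finset.card_filter_univ_sum {α β : Type*} [Fintype α] [Fintype β] (p : α ⊕ β → Prop)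
    [DecidablePred p] :
    (Finset.univ.filter p).card =
      (Finset.univ.filter fun a => p (Sum.inl a)).card +
        (Finset.univ.filter fun b => p (Sum.inr b)).card := by
  simp only [Finset.card_filter, Fintype.sum_sum_type]

section Influence

variable {V : Type*} [Fintype V] {Es : Set (V × V)} {S : Set V} {u v : V}

theorem mem_influenced_iff : v ∈ influenced Es S ↔ ∃ s ∈ S, Reaches Es s v := by
  simp [influenced]

theorem mem_influenced_of_mem (hv : v ∈ S) : v ∈ influenced Es S :=
  mem_influenced_iff.2 ⟨v, hv, Relation.ReflTransGen.refl⟩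

theorem mem_influenced_of_edge (hu : u ∈ influenced Es S) (huv : (u, v) ∈ Es) :
    v ∈ influenced Es S := by
  obtain ⟨s, hs, hsu⟩ := mem_influenced_iff.1 hu
  exact mem_influenced_iff.2 ⟨s, hs, hsu.tail huv⟩

theorem exists_edge_of_mem_influenced (hv : v ∈ influenced Es S) (hvS : v ∉ S) :
    ∃ u ∈ influenced Es S, (u, v) ∈ Es := by
  obtain ⟨s, hs, hsv⟩ := mem_influenced_iff.1 hv
  rcases hsv.cases_tail with rfl | ⟨u, hsu, huv⟩
  · exact absurd hs hvS
  · exact ⟨u, mem_influenced_iff.2 ⟨s, hs, hsu⟩, huv⟩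

theorem mem_influenced_of_chain {k : ℕ} (f : Fin k → V)
    (hstart : ∀ i : Fin k, (i : ℕ) = 0 → f i ∈ influenced Es S)
    (hstep : ∀ i j : Fin k, (i : ℕ) + 1 = j → (f i, f j) ∈ Es) (j : Fin k) :
    f j ∈ influenced Es S := by
  obtain ⟨j, hj⟩ := j
  induction j with
  | zero => exact hstart _ rfl
  | succ j ih => exact mem_influenced_of_edge (ih (by omega)) (hstep ⟨j, by omega⟩ _ rfl)

theorem card_filter_reaches_of_subsingleton (hS : S.Subsingleton) :
    (Finset.univ.filter fun s => s ∈ S ∧ Reaches Es s v).card =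
      if v ∈ influenced Es S then 1 else 0 := by
  split_ifs with hv
  · obtain ⟨s, hs, hsv⟩ := mem_influenced_iff.1 hv
    refine Finset.card_eq_one.2 ⟨s, Finset.eq_singleton_iff_unique_mem.2 ⟨by simp [hs, hsv], ?_⟩⟩
    simp only [Finset.mem_filter, Finset.mem_univ, true_and, and_imp]
    exact fun t ht _ => hS ht hs
  · refine Finset.card_eq_zero.2 (Finset.filter_eq_empty_iff.2 ?_)
    rintro s - ⟨hs, hsv⟩
    exact hv (mem_influenced_iff.2 ⟨s, hs, hsv⟩)

end Influence

namespace IndepSetReduction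

variable {X : Type*} {G : SimpleGraph X} {n g : ℕ}

theorem fst_eq_of_mem_ISEdges_line {a : ISVoter G n g} {j : Fin (n * g - g)}
    (h : (a, Sum.inl j) ∈ ISEdges G n g) :
    ∃ i : Fin (n * g - g), (i : ℕ) + 1 = j ∧ a = Sum.inl i := by
  rcases h with ⟨i, j', hij, ha, hj⟩ | ⟨_, _, _, _, h⟩ | ⟨_, _, _, _, _, _, h⟩ |
    ⟨_, _, _, _, _, h⟩ <;> simp only [Sum.inl.injEq, reduceCtorEq] at *
  exact ⟨i, hj ▸ hij, ha⟩

theorem fst_eq_of_mem_ISEdges_vertex {a : ISVoter G n g} {x : X}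
    (h : (a, Sum.inr (Sum.inl x)) ∈ ISEdges G n g) :
    ∃ i : Fin (n * g - g), (i : ℕ) + 1 = n * g - g ∧ a = Sum.inl i := by
  rcases h with ⟨_, _, _, _, h⟩ | ⟨i, _, hi, ha, _⟩ | ⟨_, _, _, _, _, _, h⟩ |
    ⟨_, _, _, _, _, h⟩ <;> simp only [Sum.inl.injEq, Sum.inr.injEq, reduceCtorEq] at *
  exact ⟨i, hi, ha⟩

theorem fst_eq_of_mem_ISEdges_edgeNode {a : ISVoter G n g} {z : G.edgeSet} {j : Fin g}
    (h : (a, Sum.inr (Sum.inr (Sum.inl (z, j)))) ∈ ISEdges G n g) :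
    (∃ x ∈ (z : Sym2 X), a = Sum.inr (Sum.inl x)) ∨
      ∃ i : Fin g, (i : ℕ) + 1 = j ∧ a = Sum.inr (Sum.inr (Sum.inl (z, i))) := by
  rcases h with ⟨_, _, _, _, h⟩ | ⟨_, _, _, _, h⟩ | ⟨x, z', _, hx, _, ha, h⟩ |
    ⟨z', i, _, hij, ha, h⟩ <;>
    simp only [Sum.inl.injEq, Sum.inr.injEq, Prod.mk.injEq, reduceCtorEq] at h
  · exact Or.inl ⟨x, h.1 ▸ hx, ha⟩
  · obtain ⟨rfl, rfl⟩ := h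
    exact Or.inr ⟨i, hij, ha⟩

def ISEdgesInto (I : Finset X) : Set (ISVoter G n g × ISVoter G n g) :=
  {p ∈ ISEdges G n g | ∃ x ∈ I, p.2 = Sum.inr (Sum.inl x)}

@[simp]
theorem ISEdgesInto_empty : ISEdgesInto (G := G) (n := n) (g := g) ∅ = ∅ := by
  simp [ISEdgesInto]

theorem ISSeeds_subsingleton : (ISSeeds G n g).Subsingleton := by
  rintro _ ⟨i, hi, rfl⟩ _ ⟨j, hj, rfl⟩
  rw [Fin.ext (hi.trans hj.symm)]

variable [Fintype X] [Fintype G.edgeSet] {Es : Set (ISVoter G n g × ISVoter G n g)}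

theorem line_mem_influenced_of_le (hEs : Es ⊆ ISEdges G n g) {i j : Fin (n * g - g)}
    (hj : Sum.inl j ∈ influenced Es (ISSeeds G n g)) (hij : i ≤ j) :
    Sum.inl i ∈ influenced Es (ISSeeds G n g) := by
  obtain ⟨j, hjL⟩ := j
  induction j with
  | zero => rwa [show i = ⟨0, hjL⟩ from Fin.ext (Nat.le_zero.1 (Fin.le_def.1 hij))]
  | succ j ih =>
    rcases (Fin.le_def.1 hij).lt_or_eq with hlt | heq
    · obtain ⟨u, hu, hu_edge⟩ := exists_edge_of_mem_influenced hj (by simp [ISSeeds])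
      obtain ⟨k, hk, rfl⟩ := fst_eq_of_mem_ISEdges_line (hEs hu_edge)
      rw [show k = ⟨j, by omega⟩ from Fin.ext (by simpa using hk)] at hu
      exact ih _ hu (Fin.le_def.2 (by simp only at hlt ⊢; omega))
    · rwa [Fin.ext heq]

theorem line_mem_influenced_of_vertex (hEs : Es ⊆ ISEdges G n g) {x : X}
    (hx : Sum.inr (Sum.inl x) ∈ influenced Es (ISSeeds G n g)) (i : Fin (n * g - g)) :
    Sum.inl i ∈ influenced Es (ISSeeds G n g) := by
  obtain ⟨u, hu, hu_edge⟩ := exists_edge_of_mem_influenced hx (by simp [ISSeeds])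
  obtain ⟨last, hlast, rfl⟩ := fst_eq_of_mem_ISEdges_vertex (hEs hu_edge)
  exact line_mem_influenced_of_le hEs hu (Fin.le_def.2 (by omega))

theorem exists_vertex_mem_influenced_of_edgeNode (hEs : Es ⊆ ISEdges G n g) {z : G.edgeSet}
    {j : Fin g} (hj : Sum.inr (Sum.inr (Sum.inl (z, j))) ∈ influenced Es (ISSeeds G n g)) :
    ∃ x ∈ (z : Sym2 X), Sum.inr (Sum.inl x) ∈ influenced Es (ISSeeds G n g) := by
  obtain ⟨j, hjg⟩ := j
  induction j with
  | zero =>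
    obtain ⟨u, hu, hu_edge⟩ := exists_edge_of_mem_influenced hj (by simp [ISSeeds])
    rcases fst_eq_of_mem_ISEdges_edgeNode (hEs hu_edge) with ⟨x, hx, rfl⟩ | ⟨i, hi, -⟩
    · exact ⟨x, hx, hu⟩
    · exact absurd hi (by simp)
  | succ j ih =>
    obtain ⟨u, hu, hu_edge⟩ := exists_edge_of_mem_influenced hj (by simp [ISSeeds])
    rcases fst_eq_of_mem_ISEdges_edgeNode (hEs hu_edge) with ⟨x, hx, rfl⟩ | ⟨i, hi, rfl⟩
    · exact ⟨x, hx, hu⟩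
    · rw [show i = ⟨j, by omega⟩ from Fin.ext (by simpa using hi)] at hu
      exact ih _ hu

theorem line_mem_influenced_sdiff_ISEdgesInto (I : Finset X) (i : Fin (n * g - g)) :
    Sum.inl i ∈ influenced (ISEdges G n g \ ISEdgesInto I) (ISSeeds G n g) :=
  mem_influenced_of_chain (f := fun i => (Sum.inl i : ISVoter G n g))
    (fun i hi => mem_influenced_of_mem (show _ ∈ ISSeeds G n g from ⟨i, hi, rfl⟩))
    (fun i j hij => Set.mem_sdiff_of_mem (Or.inl ⟨i, j, hij, rfl, rfl⟩) (by simp [ISEdgesInto])) i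

theorem vertex_mem_influenced_sdiff_ISEdgesInto (hL : 0 < n * g - g) {I : Finset X} {x : X}
    (hx : x ∉ I) :
    Sum.inr (Sum.inl x) ∈ influenced (ISEdges G n g \ ISEdgesInto I) (ISSeeds G n g) := by
  let last : Fin (n * g - g) := ⟨n * g - g - 1, by omega⟩
  refine mem_influenced_of_edge (line_mem_influenced_sdiff_ISEdgesInto I last)
    ⟨Or.inr (Or.inl ⟨last, x, by simp only [last]; omega, rfl, rfl⟩), ?_⟩
  rintro ⟨-, y, hy, hxy⟩
  simp only [Sum.inr.injEq, Sum.inl.injEq] at hxy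
  exact hx (hxy ▸ hy)

theorem vertex_not_mem_influenced_sdiff_ISEdgesInto {I : Finset X} {x : X} (hx : x ∈ I) :
    Sum.inr (Sum.inl x) ∉ influenced (ISEdges G n g \ ISEdgesInto I) (ISSeeds G n g) := by
  intro h
  obtain ⟨u, -, hu_edge, hu_cut⟩ := exists_edge_of_mem_influenced h (by simp [ISSeeds])
  exact hu_cut ⟨hu_edge, x, hx, rfl⟩

theorem edgeNode_mem_influenced_sdiff_ISEdgesInto (hL : 0 < n * g - g) {I : Finset X}
    (hI : ∀ a ∈ I, ∀ b ∈ I, ¬G.Adj a b) (z : G.edgeSet) (j : Fin g) :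
    Sum.inr (Sum.inr (Sum.inl (z, j))) ∈
      influenced (ISEdges G n g \ ISEdgesInto I) (ISSeeds G n g) := by
  obtain ⟨x, hxz, hxI⟩ : ∃ x ∈ (z : Sym2 X), x ∉ I := by
    obtain ⟨⟨a, b⟩, hab⟩ := z
    by_contra! h
    exact hI a (h a (Sym2.mem_mk_left a b)) b (h b (Sym2.mem_mk_right a b)) hab
  refine mem_influenced_of_chain (f := fun j => Sum.inr (Sum.inr (Sum.inl (z, j))))
    (fun i hi => mem_influenced_of_edge (vertex_mem_influenced_sdiff_ISEdgesInto hL hxI)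
      (Set.mem_sdiff_of_mem (Or.inr (Or.inr (Or.inl ⟨x, z, i, hxz, hi, rfl, rfl⟩)))
        (by simp [ISEdgesInto])))
    (fun i j hij => Set.mem_sdiff_of_mem (Or.inr (Or.inr (Or.inr ⟨z, i, j, hij, rfl, rfl⟩)))
      (by simp [ISEdgesInto])) j

theorem eps_ISScores [Nonempty X] : eps (ISScores G n g) = 1 / 3 := by
  obtain ⟨x⟩ := ‹Nonempty X›
  have hmax : (Finset.univ.sup fun v => Finset.univ.sup fun i => ISScores G n g v i) = 2 := by
    refine le_antisymm (Finset.sup_le fun v _ => Finset.sup_le fun i _ => ?_) ?_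
    · rcases v with _ | _ | _ | _ | _ <;> fin_cases i <;> simp [ISScores]
    · refine le_trans ?_ (Finset.le_sup (Finset.mem_univ (Sum.inr (Sum.inl x))))
      exact Finset.le_sup (f := ISScores G n g (Sum.inr (Sum.inl x))) (Finset.mem_univ 0)
  rw [eps, hmax]
  norm_num

theorem finalScore_eq [Nonempty X] (v : ISVoter G n g) (i : Fin 3) :
    finalScore Es (ISScores G n g) (ISSeeds G n g) (ISMsg G n g) v i =
      2 / 3 * ISScores G n g v i +
        if v ∈ influenced Es (ISSeeds G n g) then ((![0, 0, 1] : Fin 3 → ℤ) i : ℚ) else 0 := by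
  simp only [finalScore, eps_ISScores, ISMsg]
  rw [Finset.sum_const, card_filter_reaches_of_subsingleton ISSeeds_subsingleton]
  split_ifs <;> norm_num

def ISVote (reached : Bool) : ISVoter G n g → Fin 3
  | Sum.inl _ => if reached then 2 else 0
  | Sum.inr (Sum.inl _) => if reached then 2 else 0
  | Sum.inr (Sum.inr (Sum.inl _)) => if reached then 2 else 1
  | Sum.inr (Sum.inr (Sum.inr (Sum.inl _))) => 0
  | Sum.inr (Sum.inr (Sum.inr (Sum.inr _))) => 1

theorem mem_finalVoters_iff [Nonempty X] (v : ISVoter G n g) (c : Fin 3) :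
    v ∈ finalVoters Es (ISScores G n g) (ISSeeds G n g) (ISMsg G n g) c ↔
      ISVote (decide (v ∈ influenced Es (ISSeeds G n g))) v = c := by
  simp only [finalVoters, Finset.mem_filter, Finset.mem_univ, true_and, finalScore_eq]
  by_cases h : v ∈ influenced Es (ISSeeds G n g) <;>
    rcases v with _ | _ | _ | _ | _ <;> fin_cases c <;>
    simp [h, ISScores, ISVote, Fin.forall_fin_succ] <;> norm_num

noncomputable def unreachedLine (Es : Set (ISVoter G n g × ISVoter G n g)) :
    Finset (Fin (n * g - g)) :=
  Finset.univ.filter fun i => Sum.inl i ∉ influenced Es (ISSeeds G n g)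

noncomputable def unreachedVertices (Es : Set (ISVoter G n g × ISVoter G n g)) : Finset X :=
  Finset.univ.filter fun x => Sum.inr (Sum.inl x) ∉ influenced Es (ISSeeds G n g)

noncomputable def unreachedEdgeNodes (Es : Set (ISVoter G n g × ISVoter G n g)) :
    Finset (G.edgeSet × Fin g) :=
  Finset.univ.filter fun p => Sum.inr (Sum.inr (Sum.inl p)) ∉ influenced Es (ISSeeds G n g)

theorem card_finalVoters_eq_filter [Nonempty X] (c : Fin 3) :
    (finalVoters Es (ISScores G n g) (ISSeeds G n g) (ISMsg G n g) c).card =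
      (Finset.univ.filter fun v =>
        ISVote (decide (v ∈ influenced Es (ISSeeds G n g))) v = c).card := by
  congr 1
  ext v
  simp [mem_finalVoters_iff]

theorem card_finalVoters_zero [Nonempty X] :
    (finalVoters Es (ISScores G n g) (ISSeeds G n g) (ISMsg G n g) 0).card =
      (unreachedLine Es).card + (unreachedVertices Es).card + n ^ 2 * g ^ 2 := by
  simp only [card_finalVoters_eq_filter, Finset.card_filter_univ_sum]
  simp [ISVote, ite_eq_iff, unreachedLine, unreachedVertices, add_assoc]

theorem card_finalVoters_one [Nonempty X] :
    (finalVoters Es (ISScores G n g) (ISSeeds G n g) (ISMsg G n g) 1).card =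
      (unreachedEdgeNodes Es).card + n ^ 2 * g ^ 2 := by
  simp only [card_finalVoters_eq_filter, Finset.card_filter_univ_sum]
  simp [ISVote, ite_eq_iff, unreachedEdgeNodes]

theorem card_finalVoters_two_le [Nonempty X] :
    (finalVoters Es (ISScores G n g) (ISSeeds G n g) (ISMsg G n g) 2).card ≤
      (n * g - g) + Fintype.card X + Fintype.card G.edgeSet * g := by
  simp only [card_finalVoters_eq_filter, Finset.card_filter_univ_sum]
  simp only [ISVote, Fin.reduceEq, Finset.filter_false, Finset.card_empty, add_zero]
  refine (add_le_add (Finset.card_filter_le _ _)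
    (add_le_add (Finset.card_filter_le _ _) (Finset.card_filter_le _ _))).trans ?_
  simp only [Finset.card_univ, Fintype.card_fin, Fintype.card_prod, add_assoc, le_refl]

theorem MoV_eq (hg : 1 ≤ g) (hn : 2 ≤ n) (hcardX : Fintype.card X = g)
    (hcardE : Fintype.card G.edgeSet = n) :
    MoV Es (ISScores G n g) (ISSeeds G n g) (ISMsg G n g) =
      ((unreachedLine Es).card + (unreachedVertices Es).card : ℤ) -
        (unreachedEdgeNodes Es).card := by
  have : Nonempty X := Fintype.card_pos_iff.1 (hcardX ▸ hg)
  have hsize : (n * g - g) + g + n * g ≤ n ^ 2 * g ^ 2 := by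
    have hng : 2 ≤ n * g := by nlinarith
    rw [Nat.sub_add_cancel (by nlinarith)]
    nlinarith
  have hrunner_up : (Finset.univ.erase (0 : Fin 3)).sup
      (fun c => (finalVoters Es (ISScores G n g) (ISSeeds G n g) (ISMsg G n g) c).card) =
      (finalVoters Es (ISScores G n g) (ISSeeds G n g) (ISMsg G n g) 1).card := by
    rw [show Finset.univ.erase (0 : Fin 3) = {1, 2} by decide, Finset.sup_insert,
      Finset.sup_singleton, max_eq_left]
    have h2 := card_finalVoters_two_le (Es := Es)
    rw [hcardX, hcardE] at h2
    rw [card_finalVoters_one]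
    omega
  rw [MoV, hrunner_up, card_finalVoters_zero, card_finalVoters_one]
  push_cast
  ring

theorem MoV_sdiff_ISEdgesInto (hg : 1 ≤ g) (hn : 2 ≤ n) (hcardX : Fintype.card X = g)
    (hcardE : Fintype.card G.edgeSet = n) {I : Finset X} (hI : ∀ a ∈ I, ∀ b ∈ I, ¬G.Adj a b) :
    MoV (ISEdges G n g \ ISEdgesInto I) (ISScores G n g) (ISSeeds G n g) (ISMsg G n g) =
      I.card := by
  have hL : 0 < n * g - g := Nat.sub_pos_of_lt (by nlinarith)
  have hline : unreachedLine (ISEdges G n g \ ISEdgesInto I) = ∅ :=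
    Finset.filter_eq_empty_iff.2 fun i _ => not_not.2 (line_mem_influenced_sdiff_ISEdgesInto I i)
  have hvertices : unreachedVertices (ISEdges G n g \ ISEdgesInto I) = I := by
    ext x
    simp only [unreachedVertices, Finset.mem_filter, Finset.mem_univ, true_and]
    exact ⟨fun h => by_contra fun hx => h (vertex_mem_influenced_sdiff_ISEdgesInto hL hx),
      vertex_not_mem_influenced_sdiff_ISEdgesInto⟩
  have hedgeNodes : unreachedEdgeNodes (ISEdges G n g \ ISEdgesInto I) = ∅ :=
    Finset.filter_eq_empty_iff.2 fun p _ =>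
      not_not.2 (edgeNode_mem_influenced_sdiff_ISEdgesInto hL hI p.1 p.2)
  rw [MoV_eq hg hn hcardX hcardE, hline, hvertices, hedgeNodes]
  simp

theorem unreachedEdgeNodes_eq_univ (hEs : Es ⊆ ISEdges G n g) {i : Fin (n * g - g)}
    (hi : i ∈ unreachedLine Es) : unreachedEdgeNodes Es = Finset.univ := by
  refine Finset.filter_true_of_mem fun p _ hp => ?_
  obtain ⟨x, -, hx⟩ := exists_vertex_mem_influenced_of_edgeNode hEs hp
  exact (Finset.mem_filter.1 hi).2 (line_mem_influenced_of_vertex hEs hx i)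

theorem le_card_unreachedEdgeNodes_of_adj (hEs : Es ⊆ ISEdges G n g) {a b : X}
    (ha : a ∈ unreachedVertices Es) (hb : b ∈ unreachedVertices Es) (hab : G.Adj a b) :
    g ≤ (unreachedEdgeNodes Es).card := by
  let z : G.edgeSet := ⟨s(a, b), hab⟩
  calc g = (({z} : Finset G.edgeSet) ×ˢ (Finset.univ : Finset (Fin g))).card := by simp
    _ ≤ (unreachedEdgeNodes Es).card := Finset.card_le_card fun ⟨z', j⟩ hp => by
      obtain rfl : z = z' := by simpa using hp
      refine Finset.mem_filter.2 ⟨Finset.mem_univ _, fun hp => ?_⟩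
      obtain ⟨x, hx, hx_reached⟩ := exists_vertex_mem_influenced_of_edgeNode hEs hp
      rcases Sym2.mem_iff.1 hx with rfl | rfl
      · exact (Finset.mem_filter.1 ha).2 hx_reached
      · exact (Finset.mem_filter.1 hb).2 hx_reached

theorem exists_indep_MoV_le (hg : 1 ≤ g) (hn : 2 ≤ n) (hcardX : Fintype.card X = g)
    (hcardE : Fintype.card G.edgeSet = n) (hEs : Es ⊆ ISEdges G n g) :
    ∃ I : Finset X, (∀ a ∈ I, ∀ b ∈ I, ¬G.Adj a b) ∧
      MoV Es (ISScores G n g) (ISSeeds G n g) (ISMsg G n g) ≤ I.card := by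
  rw [MoV_eq hg hn hcardX hcardE]
  have hvertices : (unreachedVertices Es).card ≤ g :=
    (Finset.card_filter_le _ _).trans_eq (by simp [hcardX])
  by_cases hline : unreachedLine Es = ∅
  · by_cases hindep : ∀ a ∈ unreachedVertices Es, ∀ b ∈ unreachedVertices Es, ¬G.Adj a b
    · exact ⟨_, hindep, by simp [hline]⟩
    · push Not at hindep
      obtain ⟨a, ha, b, hb, hab⟩ := hindep
      have := le_card_unreachedEdgeNodes_of_adj hEs ha hb hab
      refine ⟨∅, by simp, ?_⟩
      simp only [hline, Finset.card_empty, Nat.cast_zero]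
      omega
  · obtain ⟨i, hi⟩ := Finset.nonempty_of_ne_empty hline
    have hline_le : (unreachedLine Es).card ≤ n * g - g :=
      (Finset.card_filter_le _ _).trans_eq (by simp)
    have hedgeNodes : (unreachedEdgeNodes Es).card = n * g := by
      simp [unreachedEdgeNodes_eq_univ hEs hi, hcardE]
    have : g ≤ n * g := by nlinarith
    refine ⟨∅, by simp, ?_⟩
    simp only [Finset.card_empty, Nat.cast_zero, hedgeNodes]
    omega

end IndepSetReduction

/-- The maximum of ΔMoV⁻(E') over all E' ⊆ E equals α(G), the maximum cardinality of an
independent set of `G`. -/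
theorem max_deltaMoV_removal_eq_indepNum
    (hg : 1 ≤ g) (hn : 2 ≤ n) (hcardX : Fintype.card X = g)
    (hcardE : Fintype.card G.edgeSet = n) :
    IsGreatest
      { d : ℤ | ∃ E' : Set (ISVoter G n g × ISVoter G n g), E' ⊆ ISEdges G n g ∧
          d = MoV (ISEdges G n g \ E') (ISScores G n g) (ISSeeds G n g) (ISMsg G n g) -
                MoV (ISEdges G n g) (ISScores G n g) (ISSeeds G n g) (ISMsg G n g) }
      ((((Finset.univ.powerset.filter fun s : Finset X =>
            ∀ a ∈ s, ∀ b ∈ s, ¬G.Adj a b).sup Finset.card : ℕ)) : ℤ) := by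
  open IndepSetReduction in
  have hMoV : MoV (ISEdges G n g) (ISScores G n g) (ISSeeds G n g) (ISMsg G n g) = 0 := by
    simpa using MoV_sdiff_ISEdgesInto hg hn hcardX hcardE (I := ∅) (by simp)
  refine ⟨?_, ?_⟩
  · obtain ⟨I, hI, hcard⟩ := Finset.exists_mem_eq_sup
      (Finset.univ.powerset.filter fun s : Finset X => ∀ a ∈ s, ∀ b ∈ s, ¬G.Adj a b)
      ⟨∅, by simp⟩ Finset.card
    refine ⟨ISEdgesInto I, Set.sep_subset _ _, ?_⟩
    rw [MoV_sdiff_ISEdgesInto hg hn hcardX hcardE (Finset.mem_filter.1 hI).2, hMoV, hcard, sub_zero]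
  · rintro d ⟨E', -, rfl⟩
    obtain ⟨I, hI, hle⟩ := exists_indep_MoV_le hg hn hcardX hcardE Set.sdiff_subset
    rw [hMoV, sub_zero]
    exact hle.trans <| Nat.cast_le.2 <| Finset.le_sup <|
      Finset.mem_filter.2 ⟨Finset.mem_powerset.2 (Finset.subset_univ I), hI⟩

end IndepSet
end
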